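/- arXiv:0907.4294 — 7 statements merged into one kernel-verified Lean document; each statement's English description precedes it below -/
import Mathlib

section
/- For every α > 0, define e_α : ℝ → ℝ by e_α(t) = tanh(α)·(1 − t·tanh(t)) + (1 − α·tanh(α))·tanh(t). Then e_α(−α) = 0, e_α has exactly one zero β(α) in (0, ∞), and e_α has no zero in ℝ other than −α and β(α). -/
/-!
Multiplying by `cosh`, the zeros of `e_α = a e + b v` (with `a = tanh α > 0`) are those of
`f t = a (cosh t - t sinh t) + b sinh t`, whose derivative is `cosh t (b - a t)`. So `f` increases
up to `b / a` and decreases afterwards; it vanishes at `-α < b / a`, is positive at `b / a`, and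
tends to `-∞` because `e_α t = a + tanh t (b - a t)` does. Hence `f` has exactly one more zero
`β > b / a`, and `β > 0` because `f 0 = a > 0`.
-/

open Real Set Filter Topology

theorem Real.tanh_eq_one_sub_exp_neg_div (x : ℝ) :
    tanh x = (1 - exp (-(2 * x))) / (1 + exp (-(2 * x))) := by
  have h : exp (-(2 * x)) = (exp x ^ 2)⁻¹ := by
    rw [← exp_nat_mul, ← exp_neg]; push_cast; ring_nf
  rw [tanh_eq, h, exp_neg]
  field_simp

theorem Real.tendsto_tanh_atTop : Tendsto tanh atTop (𝓝 1) := by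
  have h : Tendsto (fun x : ℝ => exp (-(2 * x))) atTop (𝓝 0) :=
    tendsto_exp_neg_atTop_nhds_zero.comp (tendsto_id.const_mul_atTop two_pos)
  have h' := (h.const_sub 1).div (h.const_add 1) (by norm_num)
  rw [sub_zero, add_zero, div_one] at h'
  exact h'.congr fun x => (tanh_eq_one_sub_exp_neg_div x).symm

theorem Real.tanh_pos_of_pos {x : ℝ} (hx : 0 < x) : 0 < tanh x := by
  rw [tanh_eq_sinh_div_cosh]
  exact div_pos (sinh_pos_iff.2 hx) (cosh_pos x)

theorem exists_zero_of_strictMonoOn_Iic_of_strictAntiOn_Ici {f : ℝ → ℝ} {c x₀ T : ℝ}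
    (hf : ContinuousOn f (Icc c T)) (hmono : StrictMonoOn f (Iic c))
    (hanti : StrictAntiOn f (Ici c)) (hx₀c : x₀ < c) (hfx₀ : f x₀ = 0) (hcT : c < T)
    (hfT : f T < 0) :
    ∃ β, c < β ∧ f β = 0 ∧ (∀ t, β < t → f t < 0) ∧
      ∀ t, f t = 0 → t = x₀ ∨ t = β := by
  have hfc : 0 < f c := hfx₀ ▸ hmono (mem_Iic.2 hx₀c.le) self_mem_Iic hx₀c
  obtain ⟨β, ⟨hcβ, -⟩, hfβ⟩ := intermediate_value_Icc' hcT.le hf ⟨hfT.le, hfc.le⟩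
  have hcβ : c < β := hcβ.lt_of_ne fun h => hfc.ne' (h ▸ hfβ)
  refine ⟨β, hcβ, hfβ, fun t hβt => ?_, fun t ht => ?_⟩
  · exact hfβ ▸ hanti (mem_Ici.2 hcβ.le) (mem_Ici.2 (hcβ.trans hβt).le) hβt
  · rcases le_or_gt t c with htc | hct
    · exact .inl (hmono.injOn htc hx₀c.le (ht.trans hfx₀.symm))
    · exact .inr (hanti.injOn hct.le hcβ.le (ht.trans hfβ.symm))

/-- The Jacobi field `a e + b v`, with `e t = 1 - t tanh t` and `v t = tanh t`. -/
noncomputable def jacobiField (a b t : ℝ) : ℝ := a * (1 - t * tanh t) + b * tanh t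

theorem cosh_mul_jacobiField (a b t : ℝ) :
    cosh t * jacobiField a b t = a * (cosh t - t * sinh t) + b * sinh t := by
  rw [jacobiField, tanh_eq_sinh_div_cosh]
  field_simp

theorem hasDerivAt_cosh_mul_jacobiField (a b t : ℝ) :
    HasDerivAt (fun s => cosh s * jacobiField a b s) (cosh t * (b - a * t)) t := by
  simp only [cosh_mul_jacobiField]
  exact ((((hasDerivAt_cosh t).sub ((hasDerivAt_id' t).mul (hasDerivAt_sinh t))).const_mul a).add
    ((hasDerivAt_sinh t).const_mul b)).congr_deriv (by ring)

theorem continuous_cosh_mul_jacobiField (a b : ℝ) :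
    Continuous fun s => cosh s * jacobiField a b s :=
  continuous_iff_continuousAt.2 fun t => (hasDerivAt_cosh_mul_jacobiField a b t).continuousAt

section

variable {a b : ℝ}

theorem strictMonoOn_cosh_mul_jacobiField (ha : 0 < a) :
    StrictMonoOn (fun s => cosh s * jacobiField a b s) (Iic (b / a)) := by
  refine strictMonoOn_of_hasDerivWithinAt_pos (convex_Iic _)
    (continuous_cosh_mul_jacobiField a b).continuousOn
    (fun t _ => (hasDerivAt_cosh_mul_jacobiField a b t).hasDerivWithinAt) fun t ht => ?_
  rw [interior_Iic, mem_Iio, lt_div_iff₀ ha] at ht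
  exact mul_pos (cosh_pos t) (by linarith)

theorem strictAntiOn_cosh_mul_jacobiField (ha : 0 < a) :
    StrictAntiOn (fun s => cosh s * jacobiField a b s) (Ici (b / a)) := by
  refine strictAntiOn_of_hasDerivWithinAt_neg (convex_Ici _)
    (continuous_cosh_mul_jacobiField a b).continuousOn
    (fun t _ => (hasDerivAt_cosh_mul_jacobiField a b t).hasDerivWithinAt) fun t ht => ?_
  rw [interior_Ici, mem_Ioi, div_lt_iff₀ ha] at ht
  exact mul_neg_of_pos_of_neg (cosh_pos t) (by linarith)

theorem tendsto_jacobiField_atTop (ha : 0 < a) : Tendsto (jacobiField a b) atTop atBot := by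
  have hlin : Tendsto (fun t => b - a * t) atTop atBot :=
    (tendsto_atBot_add_const_left _ b
      (tendsto_id.const_mul_atTop_of_neg (neg_neg_of_pos ha))).congr fun t => by
        simp [sub_eq_add_neg]
  refine (tendsto_atBot_add_const_left _ a (tendsto_tanh_atTop.pos_mul_atBot one_pos hlin)).congr
    fun t => ?_
  rw [jacobiField]
  ring

theorem jacobiField_zero : jacobiField a b 0 = a := by
  simp [jacobiField]

theorem exists_zeros_jacobiField (ha : 0 < a) {x₀ : ℝ} (hx₀ : x₀ < b / a)
    (hzero : jacobiField a b x₀ = 0) :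
    ∃ β, b / a < β ∧ jacobiField a b β = 0 ∧ (∀ t, β < t → jacobiField a b t < 0) ∧
      ∀ t, jacobiField a b t = 0 → t = x₀ ∨ t = β := by
  have hzero_iff (t : ℝ) : cosh t * jacobiField a b t = 0 ↔ jacobiField a b t = 0 :=
    mul_eq_zero_iff_left (cosh_pos t).ne'
  have hlarge : ∀ᶠ t in atTop, jacobiField a b t < 0 ∧ b / a < t :=
    ((tendsto_jacobiField_atTop ha).eventually (eventually_lt_atBot 0)).and (eventually_gt_atTop _)
  obtain ⟨T, hT, hT'⟩ := hlarge.exists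
  obtain ⟨β, hβ, hβzero, hneg, hzeros⟩ := exists_zero_of_strictMonoOn_Iic_of_strictAntiOn_Ici
    (continuous_cosh_mul_jacobiField a b).continuousOn (strictMonoOn_cosh_mul_jacobiField ha)
    (strictAntiOn_cosh_mul_jacobiField ha) hx₀ ((hzero_iff x₀).2 hzero) hT'
    (mul_neg_of_pos_of_neg (cosh_pos T) hT)
  exact ⟨β, hβ, (hzero_iff β).1 hβzero, fun t ht => (pos_iff_neg_of_mul_neg (hneg t ht)).1
    (cosh_pos t), fun t ht => hzeros t ((hzero_iff t).2 ht)⟩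

end

/-- For `α > 0`, the Jacobi field `e_α(t) = tanh(α)(1 − t tanh t) + (1 − α tanh α) tanh t`
vanishes at `−α`, has exactly one zero `β(α)` in `(0,∞)`, and no other zeros. -/
theorem stmt2 (α : ℝ) (hα : 0 < α) (eα : ℝ → ℝ)
    (heα : ∀ t, eα t =
      Real.tanh α * (1 - t * Real.tanh t) + (1 - α * Real.tanh α) * Real.tanh t) :
    eα (-α) = 0 ∧
    ∃ β : ℝ, 0 < β ∧ eα β = 0 ∧ (∀ t, 0 < t → eα t = 0 → t = β) ∧
      (∀ t, eα t = 0 → t = -α ∨ t = β) := by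
  obtain rfl : eα = jacobiField (tanh α) (1 - α * tanh α) := funext heα
  have ha : 0 < tanh α := tanh_pos_of_pos hα
  have hroot : jacobiField (tanh α) (1 - α * tanh α) (-α) = 0 := by
    rw [jacobiField, tanh_neg]; ring
  have hcrit : -α < (1 - α * tanh α) / tanh α := by
    rw [lt_div_iff₀ ha]; linarith
  obtain ⟨β, -, hβ, hneg, hzeros⟩ := exists_zeros_jacobiField ha hcrit hroot
  have hβpos : 0 < β := by
    refine lt_of_le_of_ne (not_lt.1 fun h => ?_) fun h => ?_
    · exact (hneg 0 h).not_gt (jacobiField_zero.symm ▸ ha)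
    · exact ha.ne' (by rwa [← h, jacobiField_zero] at hβ)
  refine ⟨hroot, β, hβpos, hβ, fun t ht htzero => ?_, hzeros⟩
  exact (hzeros t htzero).resolve_left fun h => by linarith
end

section
/- Let n ≥ 3, T_n = ∫₁^∞ (u^{2n−2} − 1)^{−1/2} du (a finite number), c = c_n the maximal solution of c·c'' = (n−1)(1 + c'²), c(0) = 1, c'(0) = 0, v(t) = c'(t)(1 + c'(t)²)^{−1/2}, e(t) = −c(t)^{2−n} + t·v(t), and let z be the unique zero of e in (0, T_n). Then: (1) the function y(t) = e(t) + T_n·v(t) has exactly one zero ℓ in (0, T_n), and ℓ ∈ (0, z); (2) for every α with 0 < α ≤ ℓ, the function w_α(t) = v(α)·e(t) + e(α)·v(t) has no zero in the open interval (0, T_n); (3) for every α with ℓ < α < T_n, w_α has exactly one zero β(α) in (0, T_n). -/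
/-!
On `t > 0` the profile satisfies `c'² = c^{2n-2} - 1`, so `v = c'/c^{n-1} > 0` and `e = v·q` with
`q = t - c/c'`, whose derivative `c c''/c'²` is positive. As `t → 0⁺`, `c' → 0` forces `q → -∞`.
Since `t = ∫₁^{c t} (u^{2n-2} - 1)^{-1/2} du` and this integral converges for `n ≥ 3`, the profile
blows up as `t → T_n`, where therefore `q → T_n`. So `q` maps `(0, T_n)` increasingly onto
`(-∞, T_n)`. Finally `y = v (q + T_n)` and `w_α = v(α) v (q + q(α))`: thus `ℓ = q⁻¹(-T_n)`, and
`w_α` vanishes exactly at `q⁻¹(-q(α))`, which exists iff `-q(α) < T_n`, i.e. iff `α > ℓ`.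
-/

open Real MeasureTheory Set Filter Topology

theorem Set.Ioo_zero_subset_Ioo_neg {T : ℝ} : Ioo 0 T ⊆ Ioo (-T) T :=
  fun _ ht => ⟨by linarith [ht.1, ht.2], ht.2⟩

theorem Set.Ico_zero_subset_Ioo_neg {T : ℝ} : Ico 0 T ⊆ Ioo (-T) T :=
  fun _ ht => ⟨by linarith [ht.1, ht.2], ht.2⟩

theorem Set.zero_mem_Ioo_neg_of_mem {T t : ℝ} (ht : t ∈ Ioo (-T) T) : (0 : ℝ) ∈ Ioo (-T) T := by
  constructor <;> linarith [ht.1, ht.2]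

theorem ContinuousOn.Iio_subset_image_Ioo_of_tendsto {f : ℝ → ℝ} {a b L : ℝ} (hab : a < b)
    (hf : ContinuousOn f (Ioo a b)) (ha : Tendsto f (𝓝[>] a) atBot)
    (hb : Tendsto f (𝓝[<] b) (𝓝 L)) :
    Iio L ⊆ f '' Ioo a b := by
  intro y hy
  obtain ⟨t₁, hft₁, ht₁⟩ :=
    ((ha.eventually (eventually_le_atBot y)).and (Ioo_mem_nhdsGT hab)).exists
  obtain ⟨t₂, hft₂, ht₂⟩ :=
    ((hb.eventually (eventually_ge_nhds hy)).and (Ioo_mem_nhdsLT hab)).exists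
  exact isPreconnected_Ioo.intermediate_value ht₁ ht₂ hf ⟨hft₁, hft₂⟩

theorem exists_zero_structure_of_eq_mul {T z : ℝ} {v e q : ℝ → ℝ} (hT : 0 < T)
    (hv : ∀ t ∈ Ioo 0 T, 0 < v t) (he : ∀ t ∈ Ioo 0 T, e t = v t * q t)
    (hq : StrictMonoOn q (Ioo 0 T)) (hmaps : MapsTo q (Ioo 0 T) (Iio T))
    (hsurj : SurjOn q (Ioo 0 T) (Iio T)) (hz : z ∈ Ioo 0 T) (hze : e z = 0) :
    ∃ ℓ ∈ Ioo 0 T, ℓ < z ∧ e ℓ + T * v ℓ = 0 ∧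
      (∀ t ∈ Ioo 0 T, e t + T * v t = 0 → t = ℓ) ∧
      (∀ α : ℝ, 0 < α → α ≤ ℓ → ∀ t ∈ Ioo 0 T, v α * e t + e α * v t ≠ 0) ∧
      (∀ α : ℝ, ℓ < α → α < T → ∃ β ∈ Ioo 0 T, v α * e β + e α * v β = 0 ∧
        ∀ t ∈ Ioo 0 T, v α * e t + e α * v t = 0 → t = β) := by
  have hw : ∀ a ∈ Ioo 0 T, ∀ t ∈ Ioo 0 T, v a * e t + e a * v t = 0 ↔ q t = -q a := by
    intro a ha t ht
    rw [he t ht, he a ha,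
      show v a * (v t * q t) + v a * q a * v t = v a * v t * (q t + q a) by ring, mul_eq_zero,
      or_iff_right (mul_pos (hv a ha) (hv t ht)).ne', add_eq_zero_iff_eq_neg]
  have hy : ∀ t ∈ Ioo 0 T, e t + T * v t = 0 ↔ q t = -T := by
    intro t ht
    rw [he t ht, show v t * q t + T * v t = v t * (q t + T) by ring, mul_eq_zero,
      or_iff_right (hv t ht).ne', add_eq_zero_iff_eq_neg]
  have hqz : q z = 0 := by
    rw [he z hz] at hze
    exact (mul_eq_zero.1 hze).resolve_left (hv z hz).ne'
  obtain ⟨ℓ, hℓ, hqℓ⟩ := hsurj (neg_lt_self hT)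
  refine ⟨ℓ, hℓ, (hq.lt_iff_lt hℓ hz).1 (by linarith), (hy ℓ hℓ).2 hqℓ,
    fun t ht hyt => hq.injOn ht hℓ (((hy t ht).1 hyt).trans hqℓ.symm), ?_, ?_⟩
  · intro α hα₀ hαℓ t ht hwt
    have hα : α ∈ Ioo 0 T := ⟨hα₀, hαℓ.trans_lt hℓ.2⟩
    have hqt := (hw α hα t ht).1 hwt
    have hqα := hq.monotoneOn hα hℓ hαℓ
    have hqtT : q t < T := hmaps ht
    linarith
  · intro α hℓα hαT
    have hα : α ∈ Ioo 0 T := ⟨hℓ.1.trans hℓα, hαT⟩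
    have hqα : q ℓ < q α := hq hℓ hα hℓα
    obtain ⟨β, hβ, hqβ⟩ := hsurj (show -q α < T by linarith)
    exact ⟨β, hβ, (hw α hα β hβ).2 hqβ,
      fun t ht hwt => hq.injOn ht hβ (((hw α hα t ht).1 hwt).trans hqβ.symm)⟩

namespace Catenoid

noncomputable def heightIntegrand (k : ℕ) (u : ℝ) : ℝ := (u ^ k - 1) ^ (-(1 : ℝ) / 2)

section heightIntegrand

variable {k : ℕ} {u x : ℝ}

theorem heightIntegrand_nonneg (hu : 1 ≤ u) : 0 ≤ heightIntegrand k u :=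
  rpow_nonneg (sub_nonneg.2 (one_le_pow₀ hu)) _

theorem heightIntegrand_pos (hk : k ≠ 0) (hu : 1 < u) : 0 < heightIntegrand k u :=
  rpow_pos_of_pos (sub_pos.2 (one_lt_pow₀ hu hk)) _

theorem measurable_heightIntegrand : Measurable (heightIntegrand k) := by
  unfold heightIntegrand
  fun_prop

theorem continuousAt_heightIntegrand (hk : k ≠ 0) (hu : 1 < u) :
    ContinuousAt (heightIntegrand k) u :=
  (continuousAt_id.pow k |>.sub continuousAt_const).rpow_const
    (Or.inl (sub_pos.2 (one_lt_pow₀ hu hk)).ne')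

theorem intervalIntegrable_heightIntegrand (hk : k ≠ 0) (hx : 1 ≤ x) :
    IntervalIntegrable (heightIntegrand k) volume 1 x := by
  have hdom : IntervalIntegrable (fun u => (u - 1) ^ (-(1 : ℝ) / 2)) volume 1 x := by
    simpa using (intervalIntegral.intervalIntegrable_rpow' (a := 0) (b := x - 1)
      (by norm_num)).comp_sub_right 1
  refine hdom.mono_fun' measurable_heightIntegrand.aestronglyMeasurable ?_
  rw [uIoc_of_le hx]
  filter_upwards [ae_restrict_mem measurableSet_Ioc] with u hu
  rw [norm_of_nonneg (heightIntegrand_nonneg hu.1.le)]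
  exact rpow_le_rpow_of_nonpos (by linarith [hu.1])
    (by linarith [le_self_pow₀ hu.1.le hk]) (by norm_num)

theorem integrableOn_Ioi_two_heightIntegrand (hk : 2 < k) :
    IntegrableOn (heightIntegrand k) (Ioi 2) := by
  have hdom : IntegrableOn (fun u : ℝ => 2 ^ ((1 : ℝ) / 2) * u ^ (-(k : ℝ) / 2)) (Ioi 2) := by
    refine (integrableOn_Ioi_rpow_of_lt ?_ two_pos).const_mul _
    have : (2 : ℝ) < k := by exact_mod_cast hk
    linarith
  refine hdom.integrable.mono' measurable_heightIntegrand.aestronglyMeasurable ?_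
  filter_upwards [ae_restrict_mem measurableSet_Ioi] with u (hu : 2 < u)
  have hu1 : 1 < u := by linarith
  rw [norm_of_nonneg (heightIntegrand_nonneg hu1.le)]
  have hk' : 2 ≤ u ^ k := hu.le.trans (le_self_pow₀ hu1.le (by omega))
  calc heightIntegrand k u ≤ (u ^ k / 2) ^ (-(1 : ℝ) / 2) :=
        rpow_le_rpow_of_nonpos (by positivity) (by linarith) (by norm_num)
    _ = 2 ^ ((1 : ℝ) / 2) * u ^ (-(k : ℝ) / 2) := by
        rw [div_rpow (by positivity) (by norm_num), ← rpow_natCast, ← rpow_mul (by linarith),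
          div_eq_mul_inv, ← rpow_neg (by norm_num)]
        ring_nf

theorem integrableOn_Ioi_one_heightIntegrand (hk : 2 < k) :
    IntegrableOn (heightIntegrand k) (Ioi 1) := by
  rw [← Ioc_union_Ioi_eq_Ioi one_le_two]
  exact ((intervalIntegrable_heightIntegrand (by omega) one_le_two).1).union
    (integrableOn_Ioi_two_heightIntegrand hk)

theorem intervalIntegral_heightIntegrand_lt (hk : 2 < k) (hx : 1 ≤ x) :
    ∫ u in (1 : ℝ)..x, heightIntegrand k u < ∫ u in Ioi 1, heightIntegrand k u := by
  have hint₁ := intervalIntegrable_heightIntegrand (k := k) (by omega) hx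
  have hint₂ := hint₁.symm.trans
    (intervalIntegrable_heightIntegrand (k := k) (by omega) (by linarith : 1 ≤ x + 1))
  have hpos : 0 < ∫ u in x..x + 1, heightIntegrand k u :=
    intervalIntegral.intervalIntegral_pos_of_pos_on hint₂
      (fun u hu => heightIntegrand_pos (by omega) (hx.trans_lt hu.1)) (by linarith)
  have hsplit := intervalIntegral.integral_add_adjacent_intervals hint₁ hint₂
  have hle : ∫ u in (1 : ℝ)..x + 1, heightIntegrand k u ≤ ∫ u in Ioi 1, heightIntegrand k u := by
    rw [intervalIntegral.integral_of_le (by linarith)]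
    exact setIntegral_mono_set (integrableOn_Ioi_one_heightIntegrand hk)
      (ae_restrict_of_forall_mem measurableSet_Ioi fun u hu => heightIntegrand_nonneg (le_of_lt hu))
      Ioc_subset_Ioi_self.eventuallyLE
  linarith

end heightIntegrand

structure IsProfile (n : ℕ) (T : ℝ) (c : ℝ → ℝ) : Prop where
  contDiffOn : ContDiffOn ℝ 2 c (Ioo (-T) T)
  map_zero : c 0 = 1
  deriv_zero : deriv c 0 = 0
  ode : ∀ t ∈ Ioo (-T) T, c t * deriv (deriv c) t = (n - 1 : ℝ) * (1 + deriv c t ^ 2)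

noncomputable def verticalField (c : ℝ → ℝ) (t : ℝ) : ℝ := deriv c t / √(1 + deriv c t ^ 2)

noncomputable def variationField (n : ℕ) (c : ℝ → ℝ) (t : ℝ) : ℝ :=
  -(c t ^ ((2 : ℤ) - n)) + t * verticalField c t

/-- The quotient `e / v` of the two Jacobi fields on the upper half `t > 0`. -/
noncomputable def ratio (c : ℝ → ℝ) (t : ℝ) : ℝ := t - c t / deriv c t

namespace IsProfile

variable {n : ℕ} {T t : ℝ} {c : ℝ → ℝ}

theorem hasDerivAt (hc : IsProfile n T c) (ht : t ∈ Ioo (-T) T) :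
    HasDerivAt c (deriv c t) t :=
  ((hc.contDiffOn.differentiableOn (by norm_num) t ht).differentiableAt
    (isOpen_Ioo.mem_nhds ht)).hasDerivAt

theorem contDiffOn_deriv (hc : IsProfile n T c) : ContDiffOn ℝ 1 (deriv c) (Ioo (-T) T) :=
  hc.contDiffOn.deriv_of_isOpen isOpen_Ioo (by norm_num)

theorem hasDerivAt_deriv (hc : IsProfile n T c) (ht : t ∈ Ioo (-T) T) :
    HasDerivAt (deriv c) (deriv (deriv c) t) t :=
  ((hc.contDiffOn_deriv.differentiableOn (by norm_num) t ht).differentiableAt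
    (isOpen_Ioo.mem_nhds ht)).hasDerivAt

theorem pos (hc : IsProfile n T c) (hn : 2 ≤ n) (ht : t ∈ Ioo (-T) T) : 0 < c t := by
  have hn' : (2 : ℝ) ≤ n := by exact_mod_cast hn
  by_contra! hle
  obtain ⟨s, hs, hcs⟩ := isPreconnected_Ioo.intermediate_value ht (zero_mem_Ioo_neg_of_mem ht)
    hc.contDiffOn.continuousOn ⟨hle, by rw [hc.map_zero]; norm_num⟩
  have := hc.ode s hs
  rw [hcs, zero_mul] at this
  nlinarith [sq_nonneg (deriv c s)]

theorem deriv_deriv_pos (hc : IsProfile n T c) (hn : 2 ≤ n) (ht : t ∈ Ioo (-T) T) :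
    0 < deriv (deriv c) t := by
  have hn' : (2 : ℝ) ≤ n := by exact_mod_cast hn
  refine pos_of_mul_pos_right ?_ (hc.pos hn ht).le
  rw [hc.ode t ht]
  nlinarith [sq_nonneg (deriv c t)]

theorem strictMonoOn_deriv (hc : IsProfile n T c) (hn : 2 ≤ n) :
    StrictMonoOn (deriv c) (Ioo (-T) T) :=
  strictMonoOn_of_deriv_pos (convex_Ioo _ _) hc.contDiffOn_deriv.continuousOn fun t ht => by
    rw [interior_Ioo] at ht
    exact (hc.hasDerivAt_deriv ht).deriv ▸ hc.deriv_deriv_pos hn ht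

theorem deriv_pos (hc : IsProfile n T c) (hn : 2 ≤ n) (ht : t ∈ Ioo 0 T) : 0 < deriv c t :=
  have ht' := Ioo_zero_subset_Ioo_neg ht
  hc.deriv_zero ▸ hc.strictMonoOn_deriv hn (zero_mem_Ioo_neg_of_mem ht') ht' ht.1

theorem strictMonoOn (hc : IsProfile n T c) (hn : 2 ≤ n) : StrictMonoOn c (Ico 0 T) :=
  strictMonoOn_of_deriv_pos (convex_Ico 0 T)
    (hc.contDiffOn.continuousOn.mono Ico_zero_subset_Ioo_neg) fun t ht => by
      rw [interior_Ico] at ht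
      exact (hc.hasDerivAt (Ioo_zero_subset_Ioo_neg ht)).deriv ▸ hc.deriv_pos hn ht

theorem one_lt (hc : IsProfile n T c) (hn : 2 ≤ n) (ht : t ∈ Ioo 0 T) : 1 < c t :=
  hc.map_zero ▸ hc.strictMonoOn hn ⟨le_rfl, ht.1.trans ht.2⟩ ⟨ht.1.le, ht.2⟩ ht.1

theorem hasDerivAt_one_add_deriv_sq_div_pow (hc : IsProfile n T c) (hn : 2 ≤ n)
    (ht : t ∈ Ioo (-T) T) :
    HasDerivAt (fun s => (1 + deriv c s ^ 2) / c s ^ (2 * n - 2)) 0 t := by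
  have hct := hc.pos hn ht
  have hk : ((2 * n - 2 : ℕ) : ℝ) = 2 * ((n : ℝ) - 1) := by
    rw [Nat.cast_sub (by omega)]; push_cast; ring
  have hpow : c t ^ (2 * n - 2) = c t ^ (2 * n - 2 - 1) * c t := by
    rw [← pow_succ]; congr 1; omega
  refine ((((hc.hasDerivAt_deriv ht).pow 2).const_add 1).div ((hc.hasDerivAt ht).pow _)
    (pow_ne_zero _ hct.ne')).congr_deriv ?_
  simp only [Pi.pow_apply]
  rw [div_eq_zero_iff, hk, hpow]
  left
  linear_combination 2 * deriv c t * c t ^ (2 * n - 2 - 1) * hc.ode t ht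

theorem one_add_deriv_sq (hc : IsProfile n T c) (hn : 2 ≤ n) (ht : t ∈ Ioo (-T) T) :
    1 + deriv c t ^ 2 = c t ^ (2 * n - 2) := by
  have hd := fun s (hs : s ∈ Ioo (-T) T) => hc.hasDerivAt_one_add_deriv_sq_div_pow hn hs
  have hconst : (1 + deriv c t ^ 2) / c t ^ (2 * n - 2) = 1 := by
    rw [isOpen_Ioo.is_const_of_deriv_eq_zero isPreconnected_Ioo
      (fun s hs => (hd s hs).differentiableAt.differentiableWithinAt) (fun s hs => (hd s hs).deriv)
      ht (zero_mem_Ioo_neg_of_mem ht), hc.map_zero, hc.deriv_zero]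
    norm_num
  rwa [div_eq_one_iff_eq (pow_pos (hc.pos hn ht) _).ne'] at hconst

theorem sqrt_one_add_deriv_sq (hc : IsProfile n T c) (hn : 2 ≤ n) (ht : t ∈ Ioo (-T) T) :
    √(1 + deriv c t ^ 2) = c t ^ (n - 1) := by
  rw [hc.one_add_deriv_sq hn ht, show 2 * n - 2 = (n - 1) * 2 by omega, pow_mul,
    sqrt_sq (pow_pos (hc.pos hn ht) _).le]

theorem verticalField_pos (hc : IsProfile n T c) (hn : 2 ≤ n) (ht : t ∈ Ioo 0 T) :
    0 < verticalField c t :=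
  div_pos (hc.deriv_pos hn ht) (sqrt_pos.2 (by positivity))

theorem variationField_eq (hc : IsProfile n T c) (hn : 2 ≤ n) (ht : t ∈ Ioo 0 T) :
    variationField n c t = verticalField c t * ratio c t := by
  have hct := hc.pos hn (Ioo_zero_subset_Ioo_neg ht)
  have hc't := hc.deriv_pos hn ht
  have hzpow : c t ^ ((2 : ℤ) - n) = c t / c t ^ (n - 1) := by
    rw [eq_div_iff (by positivity), ← zpow_natCast, ← zpow_add₀ hct.ne',
      Nat.cast_sub (by omega : 1 ≤ n)]
    norm_num
  rw [variationField, verticalField, ratio,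
    hc.sqrt_one_add_deriv_sq hn (Ioo_zero_subset_Ioo_neg ht), hzpow]
  field_simp
  ring

theorem hasDerivAt_ratio (hc : IsProfile n T c) (hn : 2 ≤ n) (ht : t ∈ Ioo 0 T) :
    HasDerivAt (ratio c) (c t * deriv (deriv c) t / deriv c t ^ 2) t := by
  have hc't := (hc.deriv_pos hn ht).ne'
  refine ((hasDerivAt_id t).sub ((hc.hasDerivAt (Ioo_zero_subset_Ioo_neg ht)).div
    (hc.hasDerivAt_deriv (Ioo_zero_subset_Ioo_neg ht)) hc't)).congr_deriv ?_
  field_simp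
  ring

theorem continuousOn_ratio (hc : IsProfile n T c) (hn : 2 ≤ n) :
    ContinuousOn (ratio c) (Ioo 0 T) :=
  fun _ ht => (hc.hasDerivAt_ratio hn ht).continuousAt.continuousWithinAt

theorem strictMonoOn_ratio (hc : IsProfile n T c) (hn : 2 ≤ n) :
    StrictMonoOn (ratio c) (Ioo 0 T) :=
  strictMonoOn_of_deriv_pos (convex_Ioo 0 T) (hc.continuousOn_ratio hn) fun t ht => by
      rw [interior_Ioo] at ht
      rw [(hc.hasDerivAt_ratio hn ht).deriv]
      have := hc.pos hn (Ioo_zero_subset_Ioo_neg ht)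
      have := hc.deriv_deriv_pos hn (Ioo_zero_subset_Ioo_neg ht)
      have := hc.deriv_pos hn ht
      positivity

theorem ratio_lt (hc : IsProfile n T c) (hn : 2 ≤ n) (ht : t ∈ Ioo 0 T) : ratio c t < t := by
  have := div_pos (hc.pos hn (Ioo_zero_subset_Ioo_neg ht)) (hc.deriv_pos hn ht)
  rw [ratio]
  linarith

theorem tendsto_ratio_nhdsGT_zero (hc : IsProfile n T c) (hn : 2 ≤ n) (hT : 0 < T) :
    Tendsto (ratio c) (𝓝[>] 0) atBot := by
  have hT' : (0 : ℝ) ∈ Ioo (-T) T := ⟨neg_lt_zero.2 hT, hT⟩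
  have hmem : Ioo 0 T ∈ 𝓝[>] (0 : ℝ) := Ioo_mem_nhdsGT hT
  have hderiv : Tendsto (deriv c) (𝓝[>] 0) (𝓝[>] 0) := by
    refine tendsto_nhdsWithin_iff.2 ⟨?_, ?_⟩
    · simpa [hc.deriv_zero] using
        (hc.hasDerivAt_deriv hT').continuousAt.tendsto.mono_left nhdsWithin_le_nhds
    · filter_upwards [hmem] with t ht using hc.deriv_pos hn ht
  have hquot : Tendsto (fun t => c t / deriv c t) (𝓝[>] 0) atTop := by
    refine tendsto_atTop_mono' _ ?_ (tendsto_inv_nhdsGT_zero.comp hderiv)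
    filter_upwards [hmem] with t ht
    rw [Function.comp_apply, inv_eq_one_div]
    exact div_le_div_of_nonneg_right (hc.one_lt hn ht).le (hc.deriv_pos hn ht).le
  exact (tendsto_id.mono_left nhdsWithin_le_nhds).add_atBot (tendsto_neg_atTop_atBot.comp hquot)

theorem div_deriv_le_two_div (hc : IsProfile n T c) (hn : 3 ≤ n) (ht : t ∈ Ioo 0 T) (h2 : 2 ≤ c t) :
    c t / deriv c t ≤ 2 / c t := by
  have hc't := hc.deriv_pos (by omega) ht
  have hpow : c t ^ 4 ≤ c t ^ (2 * n - 2) := pow_le_pow_right₀ (by linarith) (by omega)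
  have hsq := hc.one_add_deriv_sq (by omega) (Ioo_zero_subset_Ioo_neg ht)
  have h16 : (2 : ℝ) ^ 4 ≤ c t ^ 4 := pow_le_pow_left₀ (by norm_num) h2 4
  -- `(2c')² = 4 (c^{2n-2} - 1) ≥ 4c⁴ - 4 ≥ c⁴` once `c ≥ 2`
  have : (c t ^ 2) ^ 2 ≤ (2 * deriv c t) ^ 2 := by nlinarith
  rw [div_le_div_iff₀ hc't (by linarith)]
  nlinarith [(pow_le_pow_iff_left₀ (by positivity) (by positivity) two_ne_zero).1 this]

theorem tendsto_ratio_nhdsLT (hc : IsProfile n T c) (hn : 3 ≤ n) (hT : 0 < T)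
    (hcT : Tendsto c (𝓝[<] T) atTop) : Tendsto (ratio c) (𝓝[<] T) (𝓝 T) := by
  have hquot : Tendsto (fun t => c t / deriv c t) (𝓝[<] T) (𝓝 0) := by
    refine tendsto_of_tendsto_of_tendsto_of_le_of_le' tendsto_const_nhds
      ((tendsto_const_nhds (x := (2 : ℝ))).div_atTop hcT) ?_ ?_
    · filter_upwards [Ioo_mem_nhdsLT hT] with t ht
      exact (div_pos (hc.pos (by omega) (Ioo_zero_subset_Ioo_neg ht))
        (hc.deriv_pos (by omega) ht)).le
    · filter_upwards [Ioo_mem_nhdsLT hT, hcT.eventually_ge_atTop 2] with t ht h2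
      exact hc.div_deriv_le_two_div hn ht h2
  have := (tendsto_id.mono_left nhdsWithin_le_nhds).sub hquot
  rwa [sub_zero] at this

theorem hasDerivAt_intervalIntegral_comp (hc : IsProfile n T c) (hn : 2 ≤ n)
    (ht : t ∈ Ioo 0 T) :
    HasDerivAt (fun s => ∫ u in (1 : ℝ)..c s, heightIntegrand (2 * n - 2) u) 1 t := by
  have hk : 2 * n - 2 ≠ 0 := by omega
  have hct := hc.one_lt hn ht
  have hc't := hc.deriv_pos hn ht
  have hprim := intervalIntegral.integral_hasDerivAt_right
    (intervalIntegrable_heightIntegrand hk hct.le)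
    measurable_heightIntegrand.aestronglyMeasurable.stronglyMeasurableAtFilter
    (continuousAt_heightIntegrand hk hct)
  refine (hprim.comp t (hc.hasDerivAt (Ioo_zero_subset_Ioo_neg ht))).congr_deriv ?_
  rw [heightIntegrand, ← hc.one_add_deriv_sq hn (Ioo_zero_subset_Ioo_neg ht), add_sub_cancel_left,
    show -(1 : ℝ) / 2 = -(1 / 2) by ring, rpow_neg (sq_nonneg _), ← sqrt_eq_rpow,
    sqrt_sq hc't.le, inv_mul_cancel₀ hc't.ne']

theorem le_intervalIntegral_heightIntegrand (hc : IsProfile n T c) (hn : 2 ≤ n)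
    (ht : t ∈ Ioo 0 T) : t ≤ ∫ u in (1 : ℝ)..c t, heightIntegrand (2 * n - 2) u := by
  set h : ℝ → ℝ := fun s => (∫ u in (1 : ℝ)..c s, heightIntegrand (2 * n - 2) u) - s
  have hderiv : ∀ s ∈ Ioo 0 T, HasDerivAt h 0 s := fun s hs =>
    ((hc.hasDerivAt_intervalIntegral_comp hn hs).sub (hasDerivAt_id' s)).congr_deriv (sub_self 1)
  have hlower : ∀ s ∈ Ioo 0 T, -s ≤ h t := fun s hs => by
    rw [isOpen_Ioo.is_const_of_deriv_eq_zero isPreconnected_Ioo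
      (fun r hr => (hderiv r hr).differentiableAt.differentiableWithinAt)
      (fun r hr => (hderiv r hr).deriv) ht hs]
    have : 0 ≤ ∫ u in (1 : ℝ)..c s, heightIntegrand (2 * n - 2) u :=
      intervalIntegral.integral_nonneg (hc.one_lt hn hs).le fun u hu => heightIntegrand_nonneg hu.1
    change -s ≤ _ - s
    linarith
  have hlim : Tendsto (fun s : ℝ => -s) (𝓝[>] 0) (𝓝 0) := by
    simpa using (continuous_neg.tendsto (0 : ℝ)).mono_left nhdsWithin_le_nhds
  have := le_of_tendsto hlim (eventually_of_mem (Ioo_mem_nhdsGT (ht.1.trans ht.2)) hlower)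
  linarith

theorem exists_lt (hc : IsProfile n T c) (hn : 3 ≤ n)
    (hT : ∫ u in Ioi 1, heightIntegrand (2 * n - 2) u ≤ T) (M : ℝ) : ∃ t ∈ Ioo 0 T, M < c t := by
  by_contra! hbdd
  set M' := max M 1
  set H := ∫ u in (1 : ℝ)..M', heightIntegrand (2 * n - 2) u
  have hH : H < T := (intervalIntegral_heightIntegrand_lt (by omega) (le_max_right M 1)).trans_le hT
  have hH0 : 0 ≤ H := intervalIntegral.integral_nonneg (le_max_right M 1)
    fun u hu => heightIntegrand_nonneg hu.1
  obtain ⟨t, hHt, htT⟩ := exists_between (max_lt hH (hH0.trans_lt hH))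
  have ht : t ∈ Ioo 0 T := ⟨(le_max_right _ _).trans_lt hHt, htT⟩
  have hmono : ∫ u in (1 : ℝ)..c t, heightIntegrand (2 * n - 2) u ≤ H :=
    intervalIntegral.integral_mono_interval le_rfl (hc.one_lt (by omega) ht).le
      ((hbdd t ht).trans (le_max_left M 1))
      (ae_restrict_of_forall_mem measurableSet_Ioc fun u hu => heightIntegrand_nonneg hu.1.le)
      (intervalIntegrable_heightIntegrand (by omega) (le_max_right M 1))
  linarith [hc.le_intervalIntegral_heightIntegrand (by omega) ht, le_max_left H 0]

theorem tendsto_nhdsLT_atTop (hc : IsProfile n T c) (hn : 3 ≤ n)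
    (hT : ∫ u in Ioi 1, heightIntegrand (2 * n - 2) u ≤ T) : Tendsto c (𝓝[<] T) atTop := by
  refine tendsto_atTop.2 fun M => ?_
  obtain ⟨t₀, ht₀, hM⟩ := hc.exists_lt hn hT M
  filter_upwards [Ioo_mem_nhdsLT ht₀.2] with t ht
  exact hM.le.trans (hc.strictMonoOn (by omega) ⟨ht₀.1.le, ht₀.2⟩
    ⟨ht₀.1.le.trans ht.1.le, ht.2⟩ ht.1).le

end IsProfile

end Catenoid

theorem stmt8_general (n : ℕ) (hn : 3 ≤ n)
    (T : ℝ) (hT : T = ∫ u in Set.Ioi (1:ℝ), (u ^ (2*n-2) - 1) ^ (-(1:ℝ)/2))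
    (c : ℝ → ℝ)
    (hc : ContDiffOn ℝ (⊤ : ℕ∞) c (Set.Ioo (-T) T))
    (hc0 : c 0 = 1) (hc0' : deriv c 0 = 0)
    (hode : ∀ t ∈ Set.Ioo (-T) T,
      c t * deriv (deriv c) t = (n - 1 : ℝ) * (1 + (deriv c t) ^ 2))
    (v e : ℝ → ℝ)
    (hv : ∀ t, v t = deriv c t / Real.sqrt (1 + (deriv c t) ^ 2))
    (he : ∀ t, e t = -(c t ^ ((2:ℤ) - n)) + t * v t)
    (z : ℝ) (hz : z ∈ Set.Ioo 0 T) (hze : e z = 0) :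
    ∃ ℓ ∈ Set.Ioo 0 T,
      ℓ < z ∧
      e ℓ + T * v ℓ = 0 ∧
      (∀ t ∈ Set.Ioo 0 T, e t + T * v t = 0 → t = ℓ) ∧
      (∀ α : ℝ, 0 < α → α ≤ ℓ → ∀ t ∈ Set.Ioo 0 T, v α * e t + e α * v t ≠ 0) ∧
      (∀ α : ℝ, ℓ < α → α < T → ∃ β ∈ Set.Ioo 0 T,
        v α * e β + e α * v β = 0 ∧
        ∀ t ∈ Set.Ioo 0 T, v α * e t + e α * v t = 0 → t = β) := by
  have hprof : Catenoid.IsProfile n T c := ⟨hc.of_le (WithTop.coe_le_coe.2 le_top), hc0, hc0', hode⟩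
  have hn₂ : 2 ≤ n := by omega
  have hT₀ : 0 < T := hz.1.trans hz.2
  obtain rfl : v = Catenoid.verticalField c := funext hv
  obtain rfl : e = Catenoid.variationField n c := funext he
  have hblowup := hprof.tendsto_nhdsLT_atTop hn hT.ge
  refine exists_zero_structure_of_eq_mul hT₀ (fun t ht => hprof.verticalField_pos hn₂ ht)
    (fun t ht => hprof.variationField_eq hn₂ ht) (hprof.strictMonoOn_ratio hn₂)
    (fun t ht => (hprof.ratio_lt hn₂ ht).trans ht.2) ?_ hz hze
  exact (hprof.continuousOn_ratio hn₂).Iio_subset_image_Ioo_of_tendsto hT₀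
    (hprof.tendsto_ratio_nhdsGT_zero hn₂ hT₀) (hprof.tendsto_ratio_nhdsLT hn hT₀ hblowup)

/-- For `n ≥ 3` the `n`-catenoid in `ℝ^{n+1}` does not satisfy Lindelöf's property:
`y = e + T_n·v` has a unique zero `ℓ ∈ (0, z)`; for `0 < α ≤ ℓ` the Jacobi field
`w_α = v(α)e + e(α)v` has no zero in `(0, T_n)`, and for `ℓ < α < T_n` it has exactly one. -/
theorem stmt8 (n : ℕ) (hn : 3 ≤ n)
    (T : ℝ) (hT : T = ∫ u in Set.Ioi (1:ℝ), (u ^ (2*n-2) - 1) ^ (-(1:ℝ)/2))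
    (c : ℝ → ℝ)
    (hc : ContDiffOn ℝ (⊤ : ℕ∞) c (Set.Ioo (-T) T))
    (hceven : ∀ t ∈ Set.Ioo (-T) T, c (-t) = c t)
    (hc0 : c 0 = 1) (hc0' : deriv c 0 = 0)
    (hode : ∀ t ∈ Set.Ioo (-T) T,
      c t * deriv (deriv c) t = (n - 1 : ℝ) * (1 + (deriv c t) ^ 2))
    (v e : ℝ → ℝ)
    (hv : ∀ t, v t = deriv c t / Real.sqrt (1 + (deriv c t) ^ 2))
    (he : ∀ t, e t = -(c t ^ ((2:ℤ) - n)) + t * v t)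
    (z : ℝ) (hz : z ∈ Set.Ioo 0 T) (hze : e z = 0)
    (hzuniq : ∀ t ∈ Set.Ioo 0 T, e t = 0 → t = z) :
    ∃ ℓ ∈ Set.Ioo 0 T,
      ℓ < z ∧
      e ℓ + T * v ℓ = 0 ∧
      (∀ t ∈ Set.Ioo 0 T, e t + T * v t = 0 → t = ℓ) ∧
      (∀ α : ℝ, 0 < α → α ≤ ℓ → ∀ t ∈ Set.Ioo 0 T, v α * e t + e α * v t ≠ 0) ∧
      (∀ α : ℝ, ℓ < α → α < T → ∃ β ∈ Set.Ioo 0 T,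
        v α * e β + e α * v β = 0 ∧
        ∀ t ∈ Set.Ioo 0 T, v α * e t + e α * v t = 0 → t = β) :=
  stmt8_general n hn T hT c hc hc0 hc0' hode v e hv he z hz hze
end

section
/- Let n ≥ 2, T_n = ∫₁^∞ (u^{2n−2} − 1)^{−1/2} du, c = c_n the maximal solution of c·c'' = (n−1)(1 + c'²), c(0) = 1, c'(0) = 0, v(t) = c'(t)(1 + c'(t)²)^{−1/2}, and e(t) = −c(t)^{2−n} + t·v(t). Then for all α, β ∈ (0, T_n): v(α)·e(β) + e(α)·v(β) = 0 if and only if α + β = c(α)/c'(α) + c(β)/c'(β). -/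
open Real MeasureTheory Set Filter Topology ENNReal

/-!
Along the catenary, `log (1 + c'²) - 2 (n - 1) log c` has zero derivative, which gives the first
integral `√(1 + c'²) = c ^ (n - 1)`. With it the Jacobi field factors as
`e t = v t * (t - c t / c' t)`, where `t - c t / c' t` is the height at which the tangent at
`(c t, t)` meets the axis. Since `c c'' > 0` forces `c > 0` and `c'' > 0`, we get `c' > 0` and
hence `v ≠ 0` on `(0, T_n)`, so `v α e β + e α v β = v α v β (α + β - c α / c' α - c β / c' β)`.
-/

lemma setLIntegral_Ioi_one_ofReal_rpow_pos {k : ℕ} (hk : k ≠ 0) :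
    0 < ∫⁻ u in Ioi (1:ℝ), ENNReal.ofReal ((u ^ k - 1) ^ (-(1:ℝ)/2)) := by
  rw [setLIntegral_pos_iff (by measurability)]
  refine lt_of_lt_of_le (by simp) (measure_mono (s := Ioi 1) fun u (hu : 1 < u) => ⟨?_, hu⟩)
  have : 0 < u ^ k - 1 := sub_pos.2 (one_lt_pow₀ hu hk)
  simpa [Function.mem_support] using rpow_pos_of_pos this _

lemma isOpen_setOf_ofReal_abs_lt (T : ℝ≥0∞) : IsOpen {t : ℝ | ENNReal.ofReal |t| < T} :=
  isOpen_lt (ENNReal.continuous_ofReal.comp continuous_abs) continuous_const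

lemma ordConnected_setOf_ofReal_abs_lt (T : ℝ≥0∞) :
    OrdConnected {t : ℝ | ENNReal.ofReal |t| < T} :=
  ⟨fun _ ha _ hb _ hx => (ENNReal.ofReal_le_ofReal (abs_le_max_abs_abs hx.1 hx.2)).trans_lt
    (by rw [ENNReal.ofReal_max]; exact max_lt ha hb)⟩

section Catenary

variable {m : ℝ} {c : ℝ → ℝ} {I : Set ℝ}

lemma catenary_pos (hm : 0 < m) (hI : IsPreconnected I) (h0 : 0 ∈ I) (hc : ContinuousOn c I)
    (hc0 : c 0 = 1) (hode : ∀ t ∈ I, c t * deriv (deriv c) t = m * (1 + deriv c t ^ 2))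
    {t : ℝ} (ht : t ∈ I) : 0 < c t := by
  by_contra! hct
  obtain ⟨s, hs, hcs⟩ := hI.intermediate_value ht h0 hc ⟨hct, hc0 ▸ zero_le_one⟩
  have := hode s hs
  rw [hcs, zero_mul] at this
  exact (mul_pos hm (by positivity)).ne this

lemma sqrt_one_add_deriv_sq_eq_rpow (hIo : IsOpen I) (hI : IsPreconnected I) (h0 : 0 ∈ I)
    (hd : DifferentiableOn ℝ c I) (hd' : DifferentiableOn ℝ (deriv c) I)
    (hc0 : c 0 = 1) (hc0' : deriv c 0 = 0)
    (hode : ∀ t ∈ I, c t * deriv (deriv c) t = m * (1 + deriv c t ^ 2))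
    (hpos : ∀ t ∈ I, 0 < c t) {t : ℝ} (ht : t ∈ I) :
    √(1 + deriv c t ^ 2) = c t ^ m := by
  have hF : ∀ s ∈ I, HasDerivAt (fun s => Real.log (1 + deriv c s ^ 2))
      (2 * deriv c s * deriv (deriv c) s / (1 + deriv c s ^ 2)) s := fun s hs => by
    have h := ((hd' s hs).differentiableAt (hIo.mem_nhds hs)).hasDerivAt
    simpa using ((h.pow 2).const_add 1).log (by positivity : 1 + deriv c s ^ 2 ≠ 0)
  have hG : ∀ s ∈ I, HasDerivAt (fun s => 2 * m * Real.log (c s))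
      (2 * m * (deriv c s / c s)) s := fun s hs =>
    ((((hd s hs).differentiableAt (hIo.mem_nhds hs)).hasDerivAt).log (hpos s hs).ne').const_mul _
  have hlog : EqOn (fun s => Real.log (1 + deriv c s ^ 2)) (fun s => 2 * m * Real.log (c s)) I := by
    refine hIo.eqOn_of_deriv_eq hI (fun s hs => (hF s hs).differentiableAt.differentiableWithinAt)
      (fun s hs => (hG s hs).differentiableAt.differentiableWithinAt) (fun s hs => ?_) h0
      (by simp [hc0, hc0'])
    rw [(hF s hs).deriv, (hG s hs).deriv]
    have := (hpos s hs).ne'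
    field_simp
    linear_combination deriv c s * hode s hs
  have hlogt : Real.log (1 + deriv c t ^ 2) = 2 * m * Real.log (c t) := hlog ht
  rw [sqrt_eq_rpow, rpow_def_of_pos (by positivity), rpow_def_of_pos (hpos t ht), hlogt]
  ring_nf

lemma deriv_catenary_pos (hm : 0 < m) (hIo : IsOpen I) (hI : Convex ℝ I) (h0 : 0 ∈ I)
    (hd' : DifferentiableOn ℝ (deriv c) I) (hc0' : deriv c 0 = 0)
    (hode : ∀ t ∈ I, c t * deriv (deriv c) t = m * (1 + deriv c t ^ 2))
    (hpos : ∀ t ∈ I, 0 < c t) {t : ℝ} (ht : t ∈ I) (htpos : 0 < t) : 0 < deriv c t := by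
  have hmono : StrictMonoOn (deriv c) I := by
    refine strictMonoOn_of_deriv_pos hI hd'.continuousOn fun s hs => ?_
    rw [hIo.interior_eq] at hs
    exact pos_of_mul_pos_right (hode s hs ▸ mul_pos hm (by positivity)) (hpos s hs).le
  simpa [hc0'] using hmono h0 ht htpos

end Catenary

lemma neg_rpow_one_sub_add_mul_div_eq {m x y t : ℝ} (hx : 0 < x) (hy : y ≠ 0) :
    -(x ^ (1 - m)) + t * (y / x ^ m) = y / x ^ m * (t - x / y) := by
  rw [rpow_sub hx, Real.rpow_one]
  have := (rpow_pos_of_pos hx m).ne'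
  field_simp
  ring

lemma mul_mul_sub_add_mul_sub_mul_eq_zero_iff {a b x y p q : ℝ} (ha : a ≠ 0) (hb : b ≠ 0) :
    a * (b * (y - q)) + a * (x - p) * b = 0 ↔ x + y = p + q := by
  rw [← sub_eq_zero (a := x + y), show a * (b * (y - q)) + a * (x - p) * b
    = a * b * (x + y - (p + q)) by ring]
  simp [ha, hb]

theorem stmt9_general (n : ℕ) (hn : 2 ≤ n)
    (T : ℝ≥0∞)
    (hT : T = ∫⁻ u in Set.Ioi (1:ℝ), ENNReal.ofReal ((u ^ (2*n-2) - 1) ^ (-(1:ℝ)/2)))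
    (I : Set ℝ) (hI : I = {t : ℝ | ENNReal.ofReal |t| < T})
    (c : ℝ → ℝ)
    (hc : ContDiffOn ℝ (⊤ : ℕ∞) c I)
    (hc0 : c 0 = 1) (hc0' : deriv c 0 = 0)
    (hode : ∀ t ∈ I, c t * deriv (deriv c) t = (n - 1 : ℝ) * (1 + (deriv c t) ^ 2))
    (v e : ℝ → ℝ)
    (hv : ∀ t, v t = deriv c t / Real.sqrt (1 + (deriv c t) ^ 2))
    (he : ∀ t, e t = -(c t ^ ((2:ℤ) - n)) + t * v t) :
    ∀ α ∈ I, ∀ β ∈ I, 0 < α → 0 < β →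
      (v α * e β + e α * v β = 0 ↔
        α + β = c α / deriv c α + c β / deriv c β) := by
  have hm : (0 : ℝ) < n - 1 := by
    have : (2 : ℝ) ≤ n := by exact_mod_cast hn
    linarith
  have h0 : (0 : ℝ) ∈ I := by
    simpa [hI, hT] using setLIntegral_Ioi_one_ofReal_rpow_pos (k := 2 * n - 2) (by omega)
  have hIo : IsOpen I := hI ▸ isOpen_setOf_ofReal_abs_lt T
  have hIc : Convex ℝ I := hI ▸ (ordConnected_setOf_ofReal_abs_lt T).convex
  obtain ⟨hd, hc'⟩ := (contDiffOn_infty_iff_deriv_of_isOpen hIo).1 hc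
  have hd' : DifferentiableOn ℝ (deriv c) I := hc'.differentiableOn (by simp)
  have hpos : ∀ t ∈ I, 0 < c t := fun t ht =>
    catenary_pos hm hIc.isPreconnected h0 hd.continuousOn hc0 hode ht
  have hc'pos : ∀ t ∈ I, 0 < t → 0 < deriv c t := fun t ht htpos =>
    deriv_catenary_pos hm hIo hIc h0 hd' hc0' hode hpos ht htpos
  have hv_ne : ∀ t ∈ I, 0 < t → v t ≠ 0 := fun t ht htpos => by
    rw [hv]
    exact div_ne_zero (hc'pos t ht htpos).ne' (by positivity)
  have he_eq : ∀ t ∈ I, 0 < t → e t = v t * (t - c t / deriv c t) := fun t ht htpos => by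
    have hexp : c t ^ ((2 : ℤ) - n) = c t ^ (1 - ((n : ℝ) - 1)) := by
      rw [← Real.rpow_intCast]; push_cast; ring_nf
    rw [he, hv, hexp, sqrt_one_add_deriv_sq_eq_rpow hIo hIc.isPreconnected h0 hd hd' hc0 hc0'
      hode hpos ht]
    exact neg_rpow_one_sub_add_mul_div_eq (hpos t ht) (hc'pos t ht htpos).ne'
  intro α hα β hβ hαpos hβpos
  rw [he_eq α hα hαpos, he_eq β hβ hβpos]
  exact mul_mul_sub_add_mul_sub_mul_eq_zero_iff (hv_ne α hα hαpos) (hv_ne β hβ hβpos)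

/-- Lindelöf's tangent construction for the `n`-catenoid in `ℝ^{n+1}`: for `α, β ∈ (0, T_n)`,
`v(α)e(β) + e(α)v(β) = 0` if and only if `α + β = c(α)/c'(α) + c(β)/c'(β)`, i.e. the
tangents to the catenary at `(c(α), −α)` and `(c(β), β)` meet on the axis. -/
theorem stmt9 (n : ℕ) (hn : 2 ≤ n)
    (T : ℝ≥0∞)
    (hT : T = ∫⁻ u in Set.Ioi (1:ℝ), ENNReal.ofReal ((u ^ (2*n-2) - 1) ^ (-(1:ℝ)/2)))
    (I : Set ℝ) (hI : I = {t : ℝ | ENNReal.ofReal |t| < T})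
    (c : ℝ → ℝ)
    (hc : ContDiffOn ℝ (⊤ : ℕ∞) c I)
    (hceven : ∀ t ∈ I, c (-t) = c t)
    (hc0 : c 0 = 1) (hc0' : deriv c 0 = 0)
    (hode : ∀ t ∈ I, c t * deriv (deriv c) t = (n - 1 : ℝ) * (1 + (deriv c t) ^ 2))
    (v e : ℝ → ℝ)
    (hv : ∀ t, v t = deriv c t / Real.sqrt (1 + (deriv c t) ^ 2))
    (he : ∀ t, e t = -(c t ^ ((2:ℤ) - n)) + t * v t) :
    ∀ α ∈ I, ∀ β ∈ I, 0 < α → 0 < β →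
      (v α * e β + e α * v β = 0 ↔
        α + β = c α / deriv c α + c β / deriv c β) :=
  stmt9_general n hn T hT I hI c hc hc0 hc0' hode v e hv he
end

section
/- For a > 0, define for s, t ∈ ℝ: v(a,s) = cosh(a)·sinh(s)·(cosh²(a)·cosh²(s) − 1)^{−1/2}, B(a,t) = cosh(a)·sinh²(t)·(cosh²(a)·cosh²(t) − 1)^{−3/2}, f(a,s) = sinh²(a)·cosh(s)·(cosh²(a)·cosh²(s) − 1)^{−1}, and e(a,s) = f(a,s) − v(a,s)·∫₀^s B(a,t) dt. Then e(a,·) is an even function of s with e(a,0) = 1, and e(a,·) has exactly one zero z(a) in the open interval (0, ∞). -/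
/-!
Write `c = cosh a > 1` and `Q(s) = c² cosh² s - 1 > 0`. Evenness and `e(0) = 1` are read off the
formulas. For `s > 0` every term of `e' = f' - v' ∫₀^s B - v B` is negative: `f' < 0`, while `v`,
`B`, `∫₀^s B` and `v' = c (c² - 1) cosh s Q^(-3/2)` are positive. Hence `e` is strictly decreasing
on `[0, ∞)` and has at most one positive zero. It has one because `f ≤ 1 / cosh s`,
`v ≥ tanh s` and `∫₀^s B ≥ ∫₀^1 B > 0`, so `e` becomes negative.
-/

open Real Set

theorem exists_unique_zero_of_strictAntiOn_Ici {g : ℝ → ℝ} {a b : ℝ} (hab : a ≤ b)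
    (hcont : ContinuousOn g (Ici a)) (hanti : StrictAntiOn g (Ici a))
    (ha : 0 < g a) (hb : g b < 0) :
    ∃ z, a < z ∧ g z = 0 ∧ ∀ s, a < s → g s = 0 → s = z := by
  obtain ⟨z, hz, hgz⟩ := intermediate_value_Ioo' hab (hcont.mono Icc_subset_Ici_self) ⟨hb, ha⟩
  exact ⟨z, hz.1, hgz, fun s hs hgs => hanti.injOn hs.le hz.1.le (hgs.trans hgz.symm)⟩

theorem integral_zero_neg_of_even {g : ℝ → ℝ} (hg : ∀ x, g (-x) = g x) (s : ℝ) :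
    ∫ t in (0:ℝ)..-s, g t = -∫ t in (0:ℝ)..s, g t := by
  have h := intervalIntegral.integral_comp_neg (a := 0) (b := s) g
  simp only [hg, neg_zero] at h
  rw [h, intervalIntegral.integral_symm]

/- The functions of the statement, with `c = cosh a` and `sinh a ^ 2` written as `c ^ 2 - 1`. -/
namespace Catenoid

variable {c : ℝ}

noncomputable def Q (c s : ℝ) : ℝ := c ^ 2 * cosh s ^ 2 - 1

noncomputable def v (c s : ℝ) : ℝ := c * sinh s * Q c s ^ (-(1:ℝ)/2)

noncomputable def B (c t : ℝ) : ℝ := c * sinh t ^ 2 * Q c t ^ (-(3:ℝ)/2)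

noncomputable def f (c s : ℝ) : ℝ := (c ^ 2 - 1) * cosh s * (Q c s)⁻¹

noncomputable def e (c s : ℝ) : ℝ := f c s - v c s * ∫ t in (0:ℝ)..s, B c t

theorem Q_neg (c s : ℝ) : Q c (-s) = Q c s := by simp [Q]

theorem v_neg (c s : ℝ) : v c (-s) = -v c s := by simp [v, Q_neg]

theorem B_neg (c t : ℝ) : B c (-t) = B c t := by simp [B, Q_neg]

theorem f_neg (c s : ℝ) : f c (-s) = f c s := by simp [f, Q_neg]

theorem e_neg (c s : ℝ) : e c (-s) = e c s := by
  rw [e, e, f_neg, v_neg, integral_zero_neg_of_even (B_neg c)]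
  ring

theorem e_zero (hc : 1 < c) : e c 0 = 1 := by
  have : c ^ 2 - 1 ≠ 0 := by nlinarith
  simp only [e, f, v, Q, cosh_zero, sinh_zero, one_pow, mul_one, mul_zero, zero_mul,
    intervalIntegral.integral_same, sub_zero]
  field_simp

theorem Q_pos (hc : 1 < c) (s : ℝ) : 0 < Q c s := by
  unfold Q; nlinarith [one_le_cosh s, one_le_pow₀ (n := 2) (one_le_cosh s)]

theorem hasDerivAt_Q (c s : ℝ) : HasDerivAt (Q c) (2 * c ^ 2 * cosh s * sinh s) s := by
  refine ((((hasDerivAt_cosh s).pow 2).const_mul (c ^ 2)).sub_const 1).congr_deriv ?_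
  ring

theorem continuous_B (hc : 1 < c) : Continuous (B c) := by
  have hQ : Continuous (Q c) := by unfold Q; fun_prop
  exact (continuous_const.mul (continuous_sinh.pow 2)).mul
    (hQ.rpow_const fun t => Or.inl (Q_pos hc t).ne')

theorem hasDerivAt_integral_B (hc : 1 < c) (s : ℝ) :
    HasDerivAt (fun s => ∫ t in (0:ℝ)..s, B c t) (B c s) s :=
  (continuous_B hc).integral_hasStrictDerivAt 0 s |>.hasDerivAt

theorem hasDerivAt_v (hc : 1 < c) (s : ℝ) :
    HasDerivAt (v c) (c * (c ^ 2 - 1) * cosh s * Q c s ^ (-(3:ℝ)/2)) s := by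
  have hQ := Q_pos hc s
  have hpow := (hasDerivAt_Q c s).rpow_const (p := -(1:ℝ)/2) (Or.inl hQ.ne')
  refine (((hasDerivAt_sinh s).const_mul c).mul hpow).congr_deriv ?_
  -- `Q ^ (-1/2) = Q * Q ^ (-3/2)` and `Q - c² sinh² = c² - 1`
  rw [show -(1:ℝ)/2 - 1 = -(3:ℝ)/2 by norm_num,
    show -(1:ℝ)/2 = 1 + -(3:ℝ)/2 by norm_num, rpow_add hQ, rpow_one]
  set q := Q c s ^ (-(3:ℝ)/2)
  rw [show Q c s = c ^ 2 * cosh s ^ 2 - 1 from rfl]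
  linear_combination c ^ 3 * cosh s * q * cosh_sq s

theorem hasDerivAt_f (hc : 1 < c) (s : ℝ) :
    HasDerivAt (f c) (-((c ^ 2 - 1) * sinh s * (c ^ 2 * cosh s ^ 2 + 1) / Q c s ^ 2)) s := by
  have hQ := (Q_pos hc s).ne'
  refine (((hasDerivAt_cosh s).const_mul (c ^ 2 - 1)).mul
    ((hasDerivAt_Q c s).fun_inv hQ)).congr_deriv ?_
  field_simp
  rw [show Q c s = c ^ 2 * cosh s ^ 2 - 1 from rfl]
  ring

theorem hasDerivAt_e (hc : 1 < c) (s : ℝ) :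
    HasDerivAt (e c) (-((c ^ 2 - 1) * sinh s * (c ^ 2 * cosh s ^ 2 + 1) / Q c s ^ 2)
      - (c * (c ^ 2 - 1) * cosh s * Q c s ^ (-(3:ℝ)/2) * (∫ t in (0:ℝ)..s, B c t)
        + v c s * B c s)) s :=
  (hasDerivAt_f hc s).sub ((hasDerivAt_v hc s).fun_mul (hasDerivAt_integral_B hc s))

theorem v_pos (hc : 1 < c) {s : ℝ} (hs : 0 < s) : 0 < v c s :=
  mul_pos (mul_pos (by linarith) (sinh_pos_iff.2 hs)) (rpow_pos_of_pos (Q_pos hc s) _)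

theorem B_pos (hc : 1 < c) {t : ℝ} (ht : t ≠ 0) : 0 < B c t :=
  mul_pos (mul_pos (by linarith) (pow_two_pos_of_ne_zero (sinh_eq_zero.not.2 ht)))
    (rpow_pos_of_pos (Q_pos hc t) _)

theorem integral_B_pos (hc : 1 < c) {s : ℝ} (hs : 0 < s) : 0 < ∫ t in (0:ℝ)..s, B c t :=
  intervalIntegral.intervalIntegral_pos_of_pos_on ((continuous_B hc).intervalIntegrable _ _)
    (fun _ ht => B_pos hc ht.1.ne') hs

theorem strictAntiOn_e (hc : 1 < c) : StrictAntiOn (e c) (Ici 0) := by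
  refine strictAntiOn_of_deriv_neg (convex_Ici 0)
    (fun s _ => (hasDerivAt_e hc s).continuousAt.continuousWithinAt) fun s hs => ?_
  rw [interior_Ici, mem_Ioi] at hs
  rw [(hasDerivAt_e hc s).deriv]
  have hc2 : 0 < c ^ 2 - 1 := by nlinarith
  have hf' : 0 < (c ^ 2 - 1) * sinh s * (c ^ 2 * cosh s ^ 2 + 1) / Q c s ^ 2 := by
    have := sinh_pos_iff.2 hs
    have := Q_pos hc s
    positivity
  have hv' : 0 < c * (c ^ 2 - 1) * cosh s * Q c s ^ (-(3:ℝ)/2) :=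
    mul_pos (mul_pos (mul_pos (by linarith) hc2) (cosh_pos s)) (rpow_pos_of_pos (Q_pos hc s) _)
  linarith [mul_pos hv' (integral_B_pos hc hs), mul_pos (v_pos hc hs) (B_pos hc hs.ne')]

theorem f_le_inv_cosh (hc : 1 < c) (s : ℝ) : f c s ≤ (cosh s)⁻¹ := by
  have hQ := Q_pos hc s
  have hcosh := cosh_pos s
  rw [f, ← div_eq_mul_inv, div_le_iff₀ hQ, Q]
  field_simp
  nlinarith [one_le_cosh s]

theorem sinh_div_cosh_le_v (hc : 1 < c) {s : ℝ} (hs : 0 ≤ s) : sinh s / cosh s ≤ v c s := by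
  have hc0 : 0 < c := by linarith
  have hcc : 0 < c * cosh s := mul_pos hc0 (cosh_pos s)
  have hQ : Q c s ^ (-(1:ℝ)/2) ≥ (c * cosh s)⁻¹ := by
    calc Q c s ^ (-(1:ℝ)/2) ≥ ((c * cosh s) ^ 2) ^ (-(1:ℝ)/2) :=
          rpow_le_rpow_of_nonpos (Q_pos hc s) (by unfold Q; nlinarith) (by norm_num)
      _ = (c * cosh s)⁻¹ := by
          rw [← rpow_natCast, ← rpow_mul hcc.le,
            show ((2:ℕ):ℝ) * (-(1:ℝ)/2) = -1 by norm_num, rpow_neg_one]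
  calc sinh s / cosh s = c * sinh s * (c * cosh s)⁻¹ := by field_simp
    _ ≤ v c s := mul_le_mul_of_nonneg_left hQ (mul_nonneg hc0.le (sinh_nonneg_iff.2 hs))

theorem exists_e_neg (hc : 1 < c) : ∃ s, 0 ≤ s ∧ e c s < 0 := by
  set G := ∫ t in (0:ℝ)..1, B c t
  have hG : 0 < G := integral_B_pos hc one_pos
  set s := max 1 (2 / G)
  have hs1 : 1 ≤ s := le_max_left _ _
  have hGs : 2 ≤ G * sinh s := by
    have := (div_le_iff₀ hG).1 (le_max_right 1 (2 / G))
    nlinarith [self_le_sinh_iff.2 (zero_le_one.trans hs1)]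
  have hint : G ≤ ∫ t in (0:ℝ)..s, B c t := by
    rw [← intervalIntegral.integral_add_adjacent_intervals
      ((continuous_B hc).intervalIntegrable 0 1) ((continuous_B hc).intervalIntegrable 1 s)]
    have : 0 ≤ ∫ t in (1:ℝ)..s, B c t := intervalIntegral.integral_nonneg hs1
      fun _ ht => (B_pos hc (zero_lt_one.trans_le ht.1).ne').le
    linarith
  refine ⟨s, zero_le_one.trans hs1, ?_⟩
  have hv := sinh_div_cosh_le_v hc (zero_le_one.trans hs1)
  have hcosh := cosh_pos s
  have : sinh s / cosh s * G ≤ v c s * ∫ t in (0:ℝ)..s, B c t :=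
    mul_le_mul hv hint hG.le ((div_nonneg (sinh_nonneg_iff.2 (by linarith)) hcosh.le).trans hv)
  have : (cosh s)⁻¹ - sinh s / cosh s * G < 0 := by
    rw [div_mul_eq_mul_div, inv_eq_one_div, ← sub_div]
    exact div_neg_of_neg_of_pos (by linarith) hcosh
  rw [e]
  linarith [f_le_inv_cosh hc s]

end Catenoid

/-- On the catenoid `𝒞_a` in `ℍ² × ℝ`, the variation Jacobi field
`e(a,s) = f(a,s) − v(a,s)·∫₀^s B(a,t) dt` is even, equals `1` at `s = 0`, and has exactly
one zero in `(0, ∞)`. -/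
theorem stmt10 (a : ℝ) (ha : 0 < a)
    (v B f e : ℝ → ℝ)
    (hv : ∀ s, v s = Real.cosh a * Real.sinh s *
      (Real.cosh a ^ 2 * Real.cosh s ^ 2 - 1) ^ (-(1:ℝ)/2))
    (hB : ∀ t, B t = Real.cosh a * Real.sinh t ^ 2 *
      (Real.cosh a ^ 2 * Real.cosh t ^ 2 - 1) ^ (-(3:ℝ)/2))
    (hf : ∀ s, f s = Real.sinh a ^ 2 * Real.cosh s *
      (Real.cosh a ^ 2 * Real.cosh s ^ 2 - 1)⁻¹)
    (he : ∀ s, e s = f s - v s * ∫ t in (0:ℝ)..s, B t) :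
    (∀ s, e (-s) = e s) ∧ e 0 = 1 ∧
    ∃ z : ℝ, 0 < z ∧ e z = 0 ∧ ∀ s, 0 < s → e s = 0 → s = z := by
  have hc : 1 < cosh a := one_lt_cosh.2 ha.ne'
  obtain rfl : v = Catenoid.v (cosh a) := funext hv
  obtain rfl : B = Catenoid.B (cosh a) := funext hB
  obtain rfl : f = Catenoid.f (cosh a) := funext fun s => by rw [hf, sinh_sq]; rfl
  obtain rfl : e = Catenoid.e (cosh a) := funext he
  obtain ⟨s₀, hs₀, hes₀⟩ := Catenoid.exists_e_neg hc
  refine ⟨Catenoid.e_neg _, Catenoid.e_zero hc, ?_⟩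
  exact exists_unique_zero_of_strictAntiOn_Ici hs₀
    (fun s _ => (Catenoid.hasDerivAt_e hc s).continuousAt.continuousWithinAt)
    (Catenoid.strictAntiOn_e hc) (by rw [Catenoid.e_zero hc]; exact one_pos) hes₀
end

section
/- For a > 0, define v(a,s) = cosh(a)·sinh(s)·(cosh²(a)·cosh²(s) − 1)^{−1/2}, B(a,t) = cosh(a)·sinh²(t)·(cosh²(a)·cosh²(t) − 1)^{−3/2}, f(a,s) = sinh²(a)·cosh(s)·(cosh²(a)·cosh²(s) − 1)^{−1}, e(a,s) = f(a,s) − v(a,s)·∫₀^s B(a,t) dt, and E(a) = ∫₀^∞ B(a,t) dt. Let z(a) be the unique zero of e(a,·) in (0,∞). Then: (1) the integral E(a) converges and 0 < E(a) < ∞; (2) the function w(s) = e(a,s) − E(a)·v(a,s) has exactly one zero ℓ(a) in (0, ∞), and ℓ(a) ∈ (0, z(a)); (3) for every α with 0 < α < ℓ(a), the function s ↦ v(a,α)·e(a,s) + e(a,α)·v(a,s) has no zero in (0, ∞); (4) for every α > ℓ(a), this function has exactly one zero β(α) in (0, ∞). -/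
open Real MeasureTheory Set Filter Topology

/-! On `s > 0` every field involved is a positive multiple of `v`: `e = v g` with
`g = f / v - ∫₀ˢ B`. The quotient `f / v` is positive, strictly decreasing, blows up at `0⁺` and
vanishes at `∞`, while `∫₀ˢ B` increases to `E`; so `g` decreases strictly from `+∞` to `-E`.
Hence `e - E v = v (g - E)` vanishes exactly once, at `g = E`, which comes before the zero `z`
of `g`; and `v(α) e + e(α) v = v(α) v (g + g(α))` vanishes iff `g = -g(α)`, which has no
solution when `g(α) > E`, i.e. `α < ℓ`, and exactly one when `g(α) < E`. -/

section LevelSets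

variable {g : ℝ → ℝ} {b L : ℝ}

theorem StrictAntiOn.lt_of_tendsto_atTop (hg : StrictAntiOn g (Ioi b))
    (hL : Tendsto g atTop (𝓝 L)) {x : ℝ} (hx : b < x) : L < g x := by
  have hx1 : b < x + 1 := by linarith
  have hle : L ≤ g (x + 1) :=
    le_of_tendsto hL (eventually_ge_atTop (x + 1) |>.mono fun y hy =>
      hg.antitoneOn hx1 (hx1.trans_le hy) hy)
  exact hle.trans_lt (hg hx hx1 (lt_add_one x))

theorem ContinuousOn.exists_eq_of_tendsto_nhdsGT_atTop (hg : ContinuousOn g (Ioi b))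
    (hb : Tendsto g (𝓝[>] b) atTop) (hL : Tendsto g atTop (𝓝 L)) {c : ℝ} (hc : L < c) :
    ∃ x, b < x ∧ g x = c := by
  obtain ⟨x₁, hgx₁, hx₁⟩ :=
    ((hL.eventually (gt_mem_nhds hc)).and (eventually_gt_atTop b)).exists
  obtain ⟨x₀, hgx₀, hx₀⟩ :=
    ((hb.eventually (eventually_ge_atTop c)).and self_mem_nhdsWithin).exists
  exact isPreconnected_Ioi.intermediate_value hx₁ hx₀ hg ⟨hgx₁.le, hgx₀⟩

theorem StrictAntiOn.existsUnique_eq_of_tendsto (hg : StrictAntiOn g (Ioi b))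
    (hgc : ContinuousOn g (Ioi b)) (hb : Tendsto g (𝓝[>] b) atTop) (hL : Tendsto g atTop (𝓝 L))
    {c : ℝ} (hc : L < c) : ∃ x, b < x ∧ g x = c ∧ ∀ y, b < y → g y = c → y = x := by
  obtain ⟨x, hx, hgx⟩ := hgc.exists_eq_of_tendsto_nhdsGT_atTop hb hL hc
  exact ⟨x, hx, hgx, fun y hy hgy => hg.injOn hy hx (hgy.trans hgx.symm)⟩

end LevelSets

theorem exists_critical_zero_of_eq_mul_strictAntiOn {v e g : ℝ → ℝ} {E z : ℝ}
    (hanti : StrictAntiOn g (Ioi 0)) (hcont : ContinuousOn g (Ioi 0))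
    (h0 : Tendsto g (𝓝[>] 0) atTop) (htop : Tendsto g atTop (𝓝 (-E))) (hE : 0 < E)
    (hv : ∀ s, 0 < s → 0 < v s) (he : ∀ s, 0 < s → e s = v s * g s)
    (hz : 0 < z) (hze : e z = 0) :
    ∃ ℓ : ℝ, 0 < ℓ ∧ ℓ < z ∧ e ℓ - E * v ℓ = 0 ∧
      (∀ s, 0 < s → e s - E * v s = 0 → s = ℓ) ∧
      (∀ α : ℝ, 0 < α → α < ℓ → ∀ s, 0 < s → v α * e s + e α * v s ≠ 0) ∧
      (∀ α : ℝ, ℓ < α → ∃ β : ℝ, 0 < β ∧ v α * e β + e α * v β = 0 ∧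
        ∀ s, 0 < s → v α * e s + e α * v s = 0 → s = β) := by
  have hlevel : ∀ c, -E < c → ∃ x, 0 < x ∧ g x = c ∧ ∀ y, 0 < y → g y = c → y = x :=
    fun _ => hanti.existsUnique_eq_of_tendsto hcont h0 htop
  have hw_zero : ∀ s, 0 < s → (e s - E * v s = 0 ↔ g s = E) := fun s hs => by
    rw [he s hs, mul_comm E, ← mul_sub, mul_eq_zero, or_iff_right (hv s hs).ne', sub_eq_zero]
  have hpair_zero : ∀ α s, 0 < α → 0 < s → (v α * e s + e α * v s = 0 ↔ g s = -g α) :=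
    fun α s hα hs => by
      rw [he s hs, he α hα, show v α * (v s * g s) + v α * g α * v s
        = v α * v s * (g s + g α) by ring, mul_eq_zero,
        or_iff_right (mul_pos (hv α hα) (hv s hs)).ne', add_eq_zero_iff_eq_neg]
  obtain ⟨ℓ, hℓ, hgℓ, hℓ_unique⟩ := hlevel E (neg_lt_self hE)
  have hgz : g z = 0 := (mul_eq_zero.mp (he z hz ▸ hze)).resolve_left (hv z hz).ne'
  refine ⟨ℓ, hℓ, ?_, (hw_zero ℓ hℓ).mpr hgℓ,
    fun s hs hs0 => hℓ_unique s hs ((hw_zero s hs).mp hs0), ?_, ?_⟩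
  · exact (hanti.lt_iff_gt hz hℓ).mp (by rw [hgz, hgℓ]; exact hE)
  · intro α hα hαℓ s hs hs0
    have := hanti hα hℓ hαℓ
    have := (hpair_zero α s hα hs).mp hs0
    linarith [hanti.lt_of_tendsto_atTop htop hs]
  · intro α hℓα
    have hα : 0 < α := hℓ.trans hℓα
    have := hanti hℓ hα hℓα
    obtain ⟨β, hβ, hgβ, hβ_unique⟩ := hlevel (-g α) (by linarith)
    exact ⟨β, hβ, (hpair_zero α β hα hβ).mpr hgβ,
      fun s hs hs0 => hβ_unique s hs ((hpair_zero α s hα hs).mp hs0)⟩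

theorem Real.rpow_neg_one_half_eq_inv_sqrt {x : ℝ} (hx : 0 ≤ x) : x ^ (-(1:ℝ)/2) = (√x)⁻¹ := by
  rw [neg_div, rpow_neg hx, sqrt_eq_rpow, one_div]

theorem Real.rpow_neg_three_halves_eq_inv_sqrt_pow {x : ℝ} (hx : 0 ≤ x) :
    x ^ (-(3:ℝ)/2) = (√x ^ 3)⁻¹ := by
  rw [neg_div, rpow_neg hx, sqrt_eq_rpow, ← rpow_natCast, ← rpow_mul hx]
  norm_num

theorem Real.strictAntiOn_cosh_div_sinh : StrictAntiOn (fun s => cosh s / sinh s) (Ioi 0) := by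
  intro x hx y hy hxy
  have hsx : 0 < sinh x := sinh_pos_iff.mpr hx
  have hsy : 0 < sinh y := sinh_pos_iff.mpr hy
  have hsub : 0 < sinh (y - x) := sinh_pos_iff.mpr (sub_pos.mpr hxy)
  rw [sinh_sub] at hsub
  rw [div_lt_div_iff₀ hsy hsx]
  linarith

theorem Real.inv_cosh_le_two_mul_exp_neg (t : ℝ) : (cosh t)⁻¹ ≤ 2 * exp (-t) := by
  rw [inv_le_iff_one_le_mul₀ (cosh_pos t), cosh_eq, exp_neg]
  field_simp
  nlinarith [exp_pos (-t)]

noncomputable section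

namespace Catenoid

theorem cosh_sq_mul_cosh_sq_sub_one_nonneg (a s : ℝ) : 0 ≤ cosh a ^ 2 * cosh s ^ 2 - 1 :=
  sub_nonneg.mpr (one_le_mul_of_one_le_of_one_le (one_le_pow₀ (one_le_cosh a))
    (one_le_pow₀ (one_le_cosh s)))

/-- In this notation `v s = cosh a sinh s / radical a s`, `f s = sinh² a cosh s / radical a s ^ 2`,
`B = density a`, and on `s > 0`, `f / v = quotient a` and `e / v = jacobiRatio a`. -/
def radical (a s : ℝ) : ℝ := √(cosh a ^ 2 * cosh s ^ 2 - 1)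

def density (a t : ℝ) : ℝ := cosh a * sinh t ^ 2 / radical a t ^ 3

def cumDensity (a s : ℝ) : ℝ := ∫ t in (0:ℝ)..s, density a t

def quotient (a s : ℝ) : ℝ := sinh a ^ 2 / cosh a * (cosh s / sinh s) / radical a s

def jacobiRatio (a s : ℝ) : ℝ := quotient a s - cumDensity a s

variable {a : ℝ}

theorem sq_radical (a s : ℝ) : radical a s ^ 2 = cosh a ^ 2 * cosh s ^ 2 - 1 :=
  sq_sqrt (cosh_sq_mul_cosh_sq_sub_one_nonneg a s)

theorem radical_pos (ha : a ≠ 0) (s : ℝ) : 0 < radical a s := by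
  have h1 : 1 < cosh a ^ 2 := one_lt_pow₀ (one_lt_cosh.mpr ha) two_ne_zero
  exact sqrt_pos.mpr (sub_pos.mpr (one_lt_mul_of_lt_of_le h1 (one_le_pow₀ (one_le_cosh s))))

theorem sinh_mul_cosh_le_radical (a s : ℝ) : sinh a * cosh s ≤ radical a s := by
  refine (le_abs_self _).trans (abs_le_sqrt ?_)
  nlinarith [cosh_sq a, one_le_cosh s, sq_nonneg (sinh a)]

theorem monotoneOn_radical : MonotoneOn (radical a) (Ici 0) := by
  intro x hx y hy hxy
  have : cosh x ≤ cosh y := cosh_le_cosh.mpr (by rwa [abs_of_nonneg hx, abs_of_nonneg hy])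
  exact sqrt_le_sqrt (by gcongr)

theorem continuous_radical : Continuous (radical a) := by
  unfold radical; fun_prop

theorem density_nonneg (a t : ℝ) : 0 ≤ density a t := by
  unfold density radical; positivity

theorem density_pos (ha : a ≠ 0) {t : ℝ} (ht : t ≠ 0) : 0 < density a t := by
  have := radical_pos ha t
  have : sinh t ≠ 0 := sinh_ne_zero.mpr ht
  unfold density; positivity

theorem continuous_density (ha : a ≠ 0) : Continuous (density a) := by
  unfold density
  exact Continuous.div (by fun_prop) (continuous_radical.pow 3)
    fun t => pow_ne_zero 3 (radical_pos ha t).ne'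

theorem density_le (ha : 0 < a) (t : ℝ) :
    density a t ≤ 2 * cosh a / sinh a ^ 3 * exp (-t) := by
  have hsa : 0 < sinh a := sinh_pos_iff.mpr ha
  have hsinh : sinh t ^ 2 ≤ cosh t ^ 2 := by nlinarith [cosh_sq t]
  calc density a t ≤ cosh a * cosh t ^ 2 / (sinh a * cosh t) ^ 3 := by
        unfold density
        gcongr
        exact sinh_mul_cosh_le_radical a t
    _ = cosh a / sinh a ^ 3 * (cosh t)⁻¹ := by
        field_simp
    _ ≤ cosh a / sinh a ^ 3 * (2 * exp (-t)) := by
        gcongr; exact inv_cosh_le_two_mul_exp_neg t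
    _ = 2 * cosh a / sinh a ^ 3 * exp (-t) := by ring

theorem integrableOn_density (ha : 0 < a) (b : ℝ) : IntegrableOn (density a) (Ioi b) := by
  refine ((exp_neg_integrableOn_Ioi b one_pos).const_mul (2 * cosh a / sinh a ^ 3)).mono'
    (continuous_density ha.ne').aestronglyMeasurable.restrict (ae_of_all _ fun t => ?_)
  rw [norm_of_nonneg (density_nonneg a t), neg_one_mul]
  exact density_le ha t

theorem monotone_cumDensity (ha : a ≠ 0) : Monotone (cumDensity a) := by
  intro x y hxy
  have hint := fun u v => (continuous_density ha).intervalIntegrable (μ := volume) u v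
  rw [← sub_nonneg, cumDensity, cumDensity, intervalIntegral.integral_interval_sub_left (hint _ _)
    (hint _ _)]
  exact intervalIntegral.integral_nonneg hxy fun t _ => density_nonneg a t

theorem continuous_cumDensity (ha : a ≠ 0) : Continuous (cumDensity a) :=
  intervalIntegral.continuous_primitive (fun _ _ => (continuous_density ha).intervalIntegrable _ _) 0

theorem tendsto_cumDensity_atTop (ha : 0 < a) :
    Tendsto (cumDensity a) atTop (𝓝 (∫ t in Ioi 0, density a t)) :=
  intervalIntegral_tendsto_integral_Ioi 0 (integrableOn_density ha 0) tendsto_id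

theorem integral_density_pos (ha : 0 < a) : 0 < ∫ t in Ioi 0, density a t := by
  have hpos : 0 < cumDensity a 1 :=
    intervalIntegral.integral_pos one_pos (continuous_density ha.ne').continuousOn
      (fun t _ => density_nonneg a t) ⟨1, by simp, density_pos ha.ne' one_ne_zero⟩
  exact hpos.trans_le ((monotone_cumDensity ha.ne').ge_of_tendsto (tendsto_cumDensity_atTop ha) 1)

theorem strictAntiOn_quotient (ha : 0 < a) : StrictAntiOn (quotient a) (Ioi 0) := by
  intro x hx y hy hxy
  have hC : 0 < sinh a ^ 2 / cosh a := by have := sinh_pos_iff.mpr ha; positivity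
  have hcoth : cosh y / sinh y < cosh x / sinh x := strictAntiOn_cosh_div_sinh hx hy hxy
  have := sinh_pos_iff.mpr (show (0:ℝ) < x from hx)
  exact div_lt_div₀ (mul_lt_mul_of_pos_left hcoth hC)
    (monotoneOn_radical (Ioi_subset_Ici_self hx) (Ioi_subset_Ici_self hy) hxy.le) (by positivity)
    (radical_pos ha.ne' x)

theorem continuousOn_quotient (ha : a ≠ 0) : ContinuousOn (quotient a) (Ioi 0) := by
  refine ContinuousOn.div (continuousOn_const.mul (continuous_cosh.continuousOn.div
    continuous_sinh.continuousOn fun s hs => (sinh_pos_iff.mpr hs).ne'))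
    continuous_radical.continuousOn fun s _ => (radical_pos ha s).ne'

theorem tendsto_quotient_nhdsGT_zero (ha : 0 < a) : Tendsto (quotient a) (𝓝[>] 0) atTop := by
  have hsinh : Tendsto sinh (𝓝[>] 0) (𝓝[>] 0) :=
    tendsto_nhdsWithin_of_tendsto_nhds_of_eventually_within _
      (by simpa using continuous_sinh.tendsto' 0 0 sinh_zero |>.mono_left nhdsWithin_le_nhds)
      (eventually_nhdsWithin_of_forall fun _ hs => sinh_pos_iff.mpr hs)
  have hF : Tendsto (fun s => sinh a ^ 2 / cosh a * cosh s / radical a s) (𝓝[>] 0)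
      (𝓝 (sinh a ^ 2 / cosh a * cosh 0 / radical a 0)) :=
    ((by fun_prop : Continuous fun s => sinh a ^ 2 / cosh a * cosh s).continuousAt.div
      continuous_radical.continuousAt (radical_pos ha.ne' 0).ne').mono_left nhdsWithin_le_nhds
  have hpos : 0 < sinh a ^ 2 / cosh a * cosh 0 / radical a 0 := by
    have := sinh_pos_iff.mpr ha; have := radical_pos ha.ne' 0; positivity
  refine (hF.pos_mul_atTop hpos (tendsto_inv_nhdsGT_zero.comp hsinh)).congr fun s => ?_
  simp only [quotient, Function.comp_apply]
  ring

theorem tendsto_quotient_atTop (ha : 0 < a) : Tendsto (quotient a) atTop (𝓝 0) := by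
  refine squeeze_zero' ?_ ?_ (by simpa using tendsto_inv_atTop_zero.const_mul (sinh a / cosh a))
  · filter_upwards [eventually_gt_atTop 0] with s hs
    have := sinh_pos_iff.mpr hs
    have := radical_pos ha.ne' s
    unfold quotient; positivity
  · filter_upwards [eventually_gt_atTop 0] with s hs
    have hss : s ≤ sinh s := self_le_sinh_iff.mpr hs.le
    have hrad := sinh_mul_cosh_le_radical a s
    unfold quotient
    rw [div_le_iff₀ (radical_pos ha.ne' s)]
    calc sinh a ^ 2 / cosh a * (cosh s / sinh s)
        ≤ sinh a / cosh a * s⁻¹ * (sinh a * cosh s) := by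
          rw [show sinh a / cosh a * s⁻¹ * (sinh a * cosh s) = sinh a ^ 2 / cosh a * (cosh s / s)
            by field_simp]
          gcongr
      _ ≤ sinh a / cosh a * s⁻¹ * radical a s := by gcongr

theorem mul_quotient (ha : a ≠ 0) {s : ℝ} (hs : s ≠ 0) :
    cosh a * sinh s / radical a s * quotient a s = sinh a ^ 2 * cosh s / radical a s ^ 2 := by
  have := radical_pos ha s
  have := sinh_ne_zero.mpr hs
  have := cosh_pos a
  unfold quotient
  field_simp

theorem strictAntiOn_jacobiRatio (ha : 0 < a) : StrictAntiOn (jacobiRatio a) (Ioi 0) := by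
  intro x hx y hy hxy
  have := strictAntiOn_quotient ha hx hy hxy
  have := monotone_cumDensity ha.ne' hxy.le
  unfold jacobiRatio
  linarith

theorem continuousOn_jacobiRatio (ha : a ≠ 0) : ContinuousOn (jacobiRatio a) (Ioi 0) :=
  (continuousOn_quotient ha).sub (continuous_cumDensity ha).continuousOn

theorem tendsto_jacobiRatio_nhdsGT_zero (ha : 0 < a) :
    Tendsto (jacobiRatio a) (𝓝[>] 0) atTop := by
  have hcum : Tendsto (cumDensity a) (𝓝[>] 0) (𝓝 0) := by
    simpa [cumDensity] using ((continuous_cumDensity ha.ne').tendsto 0).mono_left nhdsWithin_le_nhds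
  exact ((tendsto_quotient_nhdsGT_zero ha).atTop_add hcum.neg).congr fun s =>
    (sub_eq_add_neg _ _).symm

theorem tendsto_jacobiRatio_atTop (ha : 0 < a) :
    Tendsto (jacobiRatio a) atTop (𝓝 (-∫ t in Ioi 0, density a t)) := by
  change Tendsto (fun s => quotient a s - cumDensity a s) _ _
  simpa using (tendsto_quotient_atTop ha).sub (tendsto_cumDensity_atTop ha)

end Catenoid

end

open Catenoid in
theorem stmt11_general (a : ℝ) (ha : 0 < a)
    (v B f e : ℝ → ℝ)
    (hv : ∀ s, v s = Real.cosh a * Real.sinh s *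
      (Real.cosh a ^ 2 * Real.cosh s ^ 2 - 1) ^ (-(1:ℝ)/2))
    (hB : ∀ t, B t = Real.cosh a * Real.sinh t ^ 2 *
      (Real.cosh a ^ 2 * Real.cosh t ^ 2 - 1) ^ (-(3:ℝ)/2))
    (hf : ∀ s, f s = Real.sinh a ^ 2 * Real.cosh s *
      (Real.cosh a ^ 2 * Real.cosh s ^ 2 - 1)⁻¹)
    (he : ∀ s, e s = f s - v s * ∫ t in (0:ℝ)..s, B t)
    (E : ℝ) (hE : E = ∫ t in Set.Ioi (0:ℝ), B t)
    (z : ℝ) (hz : 0 < z) (hze : e z = 0) :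
    (MeasureTheory.IntegrableOn B (Set.Ioi 0) ∧ 0 < E) ∧
    ∃ ℓ : ℝ, 0 < ℓ ∧ ℓ < z ∧ e ℓ - E * v ℓ = 0 ∧
      (∀ s, 0 < s → e s - E * v s = 0 → s = ℓ) ∧
      (∀ α : ℝ, 0 < α → α < ℓ → ∀ s, 0 < s → v α * e s + e α * v s ≠ 0) ∧
      (∀ α : ℝ, ℓ < α → ∃ β : ℝ, 0 < β ∧ v α * e β + e α * v β = 0 ∧
        ∀ s, 0 < s → v α * e s + e α * v s = 0 → s = β) := by
  have hB_eq : B = density a := funext fun t => by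
    rw [hB, rpow_neg_three_halves_eq_inv_sqrt_pow (cosh_sq_mul_cosh_sq_sub_one_nonneg a t)]; rfl
  subst hB_eq hE
  have hv_eq : ∀ s, v s = cosh a * sinh s / radical a s := fun s => by
    rw [hv, rpow_neg_one_half_eq_inv_sqrt (cosh_sq_mul_cosh_sq_sub_one_nonneg a s)]; rfl
  have hv_pos : ∀ s, 0 < s → 0 < v s := fun s hs => by
    have := sinh_pos_iff.mpr hs; have := radical_pos ha.ne' s; rw [hv_eq]; positivity
  have he_eq : ∀ s, 0 < s → e s = v s * jacobiRatio a s := fun s hs => by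
    rw [he, hf, hv_eq, jacobiRatio, mul_sub, mul_quotient ha.ne' hs.ne', ← sq_radical]; rfl
  exact ⟨⟨integrableOn_density ha 0, integral_density_pos ha⟩,
    exists_critical_zero_of_eq_mul_strictAntiOn (strictAntiOn_jacobiRatio ha)
      (continuousOn_jacobiRatio ha.ne') (tendsto_jacobiRatio_nhdsGT_zero ha)
      (tendsto_jacobiRatio_atTop ha) (integral_density_pos ha) hv_pos he_eq hz hze⟩

/-- Catenoids in `ℍ² × ℝ` do not satisfy Lindelöf's property: with
`E(a) = ∫₀^∞ B(a,t) dt ∈ (0,∞)`, the Jacobi field `w = e − E·v` has a unique zero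
`ℓ(a) ∈ (0, z(a))`; for `0 < α < ℓ(a)` the field `v(α)e + e(α)v` has no zero in `(0,∞)`,
and for `α > ℓ(a)` it has exactly one. -/
theorem stmt11 (a : ℝ) (ha : 0 < a)
    (v B f e : ℝ → ℝ)
    (hv : ∀ s, v s = Real.cosh a * Real.sinh s *
      (Real.cosh a ^ 2 * Real.cosh s ^ 2 - 1) ^ (-(1:ℝ)/2))
    (hB : ∀ t, B t = Real.cosh a * Real.sinh t ^ 2 *
      (Real.cosh a ^ 2 * Real.cosh t ^ 2 - 1) ^ (-(3:ℝ)/2))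
    (hf : ∀ s, f s = Real.sinh a ^ 2 * Real.cosh s *
      (Real.cosh a ^ 2 * Real.cosh s ^ 2 - 1)⁻¹)
    (he : ∀ s, e s = f s - v s * ∫ t in (0:ℝ)..s, B t)
    (E : ℝ) (hE : E = ∫ t in Set.Ioi (0:ℝ), B t)
    (z : ℝ) (hz : 0 < z) (hze : e z = 0)
    (hzuniq : ∀ s, 0 < s → e s = 0 → s = z) :
    (MeasureTheory.IntegrableOn B (Set.Ioi 0) ∧ 0 < E) ∧
    ∃ ℓ : ℝ, 0 < ℓ ∧ ℓ < z ∧ e ℓ - E * v ℓ = 0 ∧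
      (∀ s, 0 < s → e s - E * v s = 0 → s = ℓ) ∧
      (∀ α : ℝ, 0 < α → α < ℓ → ∀ s, 0 < s → v α * e s + e α * v s ≠ 0) ∧
      (∀ α : ℝ, ℓ < α → ∃ β : ℝ, 0 < β ∧ v α * e β + e α * v β = 0 ∧
        ∀ s, 0 < s → v α * e s + e α * v s = 0 → s = β) :=
  stmt11_general a ha v B f e hv hB hf he E hE z hz hze
end

section
/- For a > 0, define for s ∈ ℝ: y₀(a,s) = a + ∫₀^s cosh(2a)·sinh(2t)·(cosh²(2a)·cosh²(2t) − 1)^{−1/2} dt and Λ₀(a,s) = √2·sinh(2a)·∫₀^s (cosh(2a)·cosh(2t) − 1)^{1/2}·(cosh²(2a)·cosh²(2t) − 1)^{−1} dt. Then: (1) y₀(a,·) is an even function of s and Λ₀(a,·) is an odd function of s; (2) cosh(2·y₀(a,s)) = cosh(2a)·cosh(2s) for all s ∈ ℝ; (3) for s ≥ 0, Λ₀(a,s) = λ₀(a, y₀(a,s)), where λ₀(a,ρ) = sinh(2a)·∫_a^ρ (cosh τ)^{−1}·(sinh²(2τ) − sinh²(2a))^{−1/2} dτ for ρ ≥ a.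 -/
open Real MeasureTheory Set Filter Topology

/-!
The integral defining `y₀` has the closed form `y₀(a,s) = arcosh (cosh 2a · cosh 2s) / 2`: the
integrand is the derivative of the right-hand side, which gives the evenness and the identity
`cosh (2 y₀) = cosh 2a · cosh 2s` at once. For `s ≥ 0`, `y₀(a,·)` maps `(0, s]` increasingly onto
`(a, y₀(a,s)]`, and the substitution `τ = y₀(a,t)` turns the integrand of `λ₀` into `√2` times that
of `Λ₀`. The integrand of `λ₀` blows up at `τ = a`; the change of variables formula for injective
differentiable maps holds for arbitrary integrands, so no integrability has to be checked.
-/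

theorem intervalIntegral.integral_zero_neg_of_even {E : Type*} [NormedAddCommGroup E]
    [NormedSpace ℝ E] {f : ℝ → E} (hf : Function.Even f) (u : ℝ) :
    ∫ x in (0:ℝ)..-u, f x = -∫ x in (0:ℝ)..u, f x := by
  rw [intervalIntegral.integral_symm, ← neg_zero, ← intervalIntegral.integral_comp_neg]
  simp only [hf _, neg_zero]

theorem Real.one_le_cosh_mul_cosh (x y : ℝ) : 1 ≤ cosh x * cosh y := by
  nlinarith [one_le_cosh x, one_le_cosh y]

theorem Real.one_lt_cosh_mul_cosh {x : ℝ} (hx : x ≠ 0) (y : ℝ) : 1 < cosh x * cosh y := by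
  nlinarith [one_lt_cosh.2 hx, one_le_cosh y]

noncomputable def catenaryHeight (a s : ℝ) : ℝ := arcosh (cosh (2*a) * cosh (2*s)) / 2

noncomputable def yIntegrand (a t : ℝ) : ℝ :=
  cosh (2*a) * sinh (2*t) * (cosh (2*a) ^ 2 * cosh (2*t) ^ 2 - 1) ^ (-(1:ℝ)/2)

noncomputable def ΛIntegrand (a t : ℝ) : ℝ :=
  (cosh (2*a) * cosh (2*t) - 1) ^ ((1:ℝ)/2) * (cosh (2*a) ^ 2 * cosh (2*t) ^ 2 - 1)⁻¹

noncomputable def lamIntegrand (a τ : ℝ) : ℝ :=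
  (cosh τ)⁻¹ * (sinh (2*τ) ^ 2 - sinh (2*a) ^ 2) ^ (-(1:ℝ)/2)

section

variable {a : ℝ}

theorem cosh_two_mul_catenaryHeight (a s : ℝ) :
    cosh (2 * catenaryHeight a s) = cosh (2*a) * cosh (2*s) := by
  rw [catenaryHeight, mul_div_cancel₀ _ two_ne_zero, cosh_arcosh (one_le_cosh_mul_cosh _ _)]

theorem even_catenaryHeight (a : ℝ) : Function.Even (catenaryHeight a) := fun s => by
  rw [catenaryHeight, catenaryHeight, mul_neg, cosh_neg]

theorem catenaryHeight_zero (ha : 0 ≤ a) : catenaryHeight a 0 = a := by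
  rw [catenaryHeight, mul_zero, cosh_zero, mul_one, arcosh_cosh (by positivity)]
  ring

theorem continuous_catenaryHeight (a : ℝ) : Continuous (catenaryHeight a) :=
  (continuousOn_arcosh.comp_continuous (by fun_prop)
    fun s => one_le_cosh_mul_cosh (2*a) (2*s)).div_const 2

theorem strictMonoOn_catenaryHeight (a : ℝ) : StrictMonoOn (catenaryHeight a) (Ici 0) := by
  intro s hs t ht hst
  have hcosh : cosh (2*s) < cosh (2*t) :=
    cosh_strictMonoOn (mem_Ici.2 (mul_nonneg zero_le_two hs))
      (mem_Ici.2 (mul_nonneg zero_le_two ht)) (by linarith)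
  have := cosh_pos (2*a)
  unfold catenaryHeight
  gcongr
  exact (arcosh_lt_arcosh (by positivity) (by positivity)).2 (by gcongr)

theorem hasDerivAt_catenaryHeight (ha : a ≠ 0) (s : ℝ) :
    HasDerivAt (catenaryHeight a) (yIntegrand a s) s := by
  have hC := one_lt_cosh_mul_cosh (mul_ne_zero two_ne_zero ha) (2*s)
  have h := (((hasDerivAt_arcosh hC).comp s
    (((hasDerivAt_cosh _).comp s ((hasDerivAt_id s).const_mul 2)).const_mul (cosh (2*a)))).div_const 2)
  refine HasDerivAt.congr_deriv (f := catenaryHeight a) h ?_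
  rw [yIntegrand, rpow_neg_one_half_eq_inv_sqrt (by nlinarith)]
  simp only [id, mul_one, mul_pow]
  ring

theorem continuous_yIntegrand (ha : a ≠ 0) : Continuous (yIntegrand a) := by
  refine (by fun_prop : Continuous fun t => cosh (2*a) * sinh (2*t)).mul
    ((by fun_prop : Continuous fun t => cosh (2*a) ^ 2 * cosh (2*t) ^ 2 - 1).rpow_const
      fun t => Or.inl ?_)
  nlinarith [one_lt_cosh_mul_cosh (mul_ne_zero two_ne_zero ha) (2*t)]

theorem integral_yIntegrand (ha : 0 < a) (s : ℝ) :
    ∫ t in (0:ℝ)..s, yIntegrand a t = catenaryHeight a s - a := by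
  rw [intervalIntegral.integral_eq_sub_of_hasDerivAt
    (fun t _ => hasDerivAt_catenaryHeight ha.ne' t)
    ((continuous_yIntegrand ha.ne').intervalIntegrable 0 s), catenaryHeight_zero ha.le]

theorem even_ΛIntegrand (a : ℝ) : Function.Even (ΛIntegrand a) := fun t => by
  rw [ΛIntegrand, ΛIntegrand, mul_neg, cosh_neg]

theorem abs_yIntegrand_mul_lamIntegrand (ha : a ≠ 0) {x : ℝ} (hx : 0 < x) :
    |yIntegrand a x| * lamIntegrand a (catenaryHeight a x) = √2 * ΛIntegrand a x := by
  have hcy := cosh_two_mul_catenaryHeight a x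
  have hC := one_lt_cosh_mul_cosh (mul_ne_zero two_ne_zero ha) (2*x)
  have hsh : 0 < cosh (2*a) * sinh (2*x) := mul_pos (cosh_pos _) (sinh_pos_iff.2 (by positivity))
  have hdiff : sinh (2 * catenaryHeight a x) ^ 2 - sinh (2*a) ^ 2
      = (cosh (2*a) * sinh (2*x)) ^ 2 := by
    linear_combination sinh_sq (2 * catenaryHeight a x) - sinh_sq (2*a)
      - cosh (2*a) ^ 2 * sinh_sq (2*x)
      + (cosh (2 * catenaryHeight a x) + cosh (2*a) * cosh (2*x)) * hcy
  rw [yIntegrand, lamIntegrand, ΛIntegrand, hdiff, ← mul_pow, ← sqrt_eq_rpow,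
    rpow_neg_one_half_eq_inv_sqrt (sq_nonneg _), sqrt_sq hsh.le,
    rpow_neg_one_half_eq_inv_sqrt (by nlinarith)]
  generalize cosh (2*a) * cosh (2*x) = C at hC hcy ⊢
  generalize catenaryHeight a x = y at hcy ⊢
  have hfactor : C ^ 2 - 1 = (C - 1) * (√2 * cosh y) ^ 2 := by
    rw [mul_pow, sq_sqrt zero_le_two]
    linear_combination (C - 1) * (cosh_two_mul y - hcy - cosh_sq y)
  have hC1 : C - 1 ≠ 0 := by linarith
  have hsqrt : 0 < √(C - 1) := sqrt_pos.2 (by linarith)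
  have hcosh := cosh_pos y
  rw [hfactor, sqrt_mul (by linarith), sqrt_sq (by positivity), abs_of_pos (by positivity)]
  field_simp
  exact (sq_sqrt (by linarith)).symm

theorem integral_lamIntegrand_catenaryHeight (ha : 0 < a) {s : ℝ} (hs : 0 ≤ s) :
    ∫ τ in a..catenaryHeight a s, lamIntegrand a τ = √2 * ∫ t in (0:ℝ)..s, ΛIntegrand a t := by
  have hmono : StrictMonoOn (catenaryHeight a) (Icc 0 s) :=
    (strictMonoOn_catenaryHeight a).mono Icc_subset_Ici_self
  have himage : catenaryHeight a '' Ioc 0 s = Ioc a (catenaryHeight a s) := by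
    rw [(continuous_catenaryHeight a).continuousOn.image_Ioc_of_strictMonoOn hs hmono,
      catenaryHeight_zero ha.le]
  have has : a ≤ catenaryHeight a s := (catenaryHeight_zero ha.le).ge.trans
    (hmono.monotoneOn (left_mem_Icc.2 hs) (right_mem_Icc.2 hs) hs)
  rw [intervalIntegral.integral_of_le has, ← himage,
    integral_image_eq_integral_abs_deriv_smul measurableSet_Ioc
      (fun x _ => (hasDerivAt_catenaryHeight ha.ne' x).hasDerivWithinAt)
      (hmono.injOn.mono Ioc_subset_Icc_self),
    intervalIntegral.integral_of_le hs, ← integral_const_mul]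
  exact setIntegral_congr_fun measurableSet_Ioc
    fun x hx => abs_yIntegrand_mul_lamIntegrand ha.ne' hx.1

end

/-- Arc-length parametrization of the catenaries generating the minimal catenoids in `ℍ³`:
`y₀(a,·)` is even, `Λ₀(a,·)` is odd, `cosh(2y₀(a,s)) = cosh(2a)cosh(2s)`, and for `s ≥ 0`,
`Λ₀(a,s) = λ₀(a, y₀(a,s))`. -/
theorem stmt14 (a : ℝ) (ha : 0 < a)
    (y₀ Λ₀ lam : ℝ → ℝ)
    (hy : ∀ s, y₀ s = a + ∫ t in (0:ℝ)..s,
      Real.cosh (2*a) * Real.sinh (2*t) *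
        (Real.cosh (2*a) ^ 2 * Real.cosh (2*t) ^ 2 - 1) ^ (-(1:ℝ)/2))
    (hΛ : ∀ s, Λ₀ s = Real.sqrt 2 * Real.sinh (2*a) * ∫ t in (0:ℝ)..s,
      (Real.cosh (2*a) * Real.cosh (2*t) - 1) ^ ((1:ℝ)/2) *
        (Real.cosh (2*a) ^ 2 * Real.cosh (2*t) ^ 2 - 1)⁻¹)
    (hlam : ∀ ρ, lam ρ = Real.sinh (2*a) * ∫ τ in a..ρ,
      (Real.cosh τ)⁻¹ * (Real.sinh (2*τ) ^ 2 - Real.sinh (2*a) ^ 2) ^ (-(1:ℝ)/2)) :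
    (∀ s, y₀ (-s) = y₀ s) ∧
    (∀ s, Λ₀ (-s) = -Λ₀ s) ∧
    (∀ s, Real.cosh (2 * y₀ s) = Real.cosh (2*a) * Real.cosh (2*s)) ∧
    (∀ s, 0 ≤ s → Λ₀ s = lam (y₀ s)) := by
  have hy' : ∀ s, y₀ s = a + ∫ t in (0:ℝ)..s, yIntegrand a t := hy
  have hΛ' : ∀ s, Λ₀ s = √2 * sinh (2*a) * ∫ t in (0:ℝ)..s, ΛIntegrand a t := hΛ
  have hlam' : ∀ ρ, lam ρ = sinh (2*a) * ∫ τ in a..ρ, lamIntegrand a τ := hlam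
  obtain rfl : y₀ = catenaryHeight a := funext fun s => by
    rw [hy', integral_yIntegrand ha, add_sub_cancel]
  refine ⟨even_catenaryHeight a, fun s => ?_, cosh_two_mul_catenaryHeight a, fun s hs => ?_⟩
  · rw [hΛ', hΛ', intervalIntegral.integral_zero_neg_of_even (even_ΛIntegrand a), mul_neg]
  · rw [hΛ', hlam', integral_lamIntegrand_catenaryHeight ha hs]
    ring
end

section
/- For a > 0, define for s ∈ ℝ: y₁(a,s) = a + ∫₀^s 2e^{−2a}·t·((2e^{−2a}·t² + cosh(2a))² − 1)^{−1/2} dt and Λ₁(a,s) = ∫₀^s e^{a}·(2t² + e^{2a}·sinh(2a)) / (2·(t² + e^{2a}·cosh²(a))·(t² + e^{2a}·sinh²(a))^{1/2}) dt. Then: (1) y₁(a,·) is a smooth even function of s satisfying cosh(2·y₁(a,s)) = 2e^{−2a}·s² + cosh(2a) for all s ∈ ℝ; (2) Λ₁(a,·) is a smooth odd function of s; (3) the function v₁(a,s) := cosh(y₁(a,s))·∂y₁/∂s(a,s) is odd and equals e^{−a}·s·(s² + e^{2a}·sinh²(a))^{−1/2}, with v₁(a,0) = 0 and v₁(a,s)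 → e^{−a} as s → ∞. -/
/-!
The closed form `arsinh (e^{-a} √(s² + e^{2a} sinh² a))` for `y₁` comes from
`cosh 2y = 1 + 2 sinh² y`. Its derivative `s / (√(s² + e^{2a} sinh² a) √(s² + e^{2a} cosh² a))`
is the integrand defining `y₁`, because
`(2e^{-2a}s² + cosh 2a)² − 1 = 4e^{-4a} (s² + e^{2a} sinh² a) (s² + e^{2a} cosh² a)`,
and it equals `a` at `s = 0`; so the two agree by the fundamental theorem of calculus.
The claims on `y₁` and `v₁ = cosh y₁ · y₁'` are then computations with
`cosh y₁ = e^{-a} √(s² + e^{2a} cosh² a)`, and `Λ₁` is smooth and odd as the primitive,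
vanishing at `0`, of a smooth even function.
-/

open Real Filter Topology
open scoped ContDiff

section Primitive

variable {E : Type*} [NormedAddCommGroup E] [NormedSpace ℝ E]

theorem ContDiff.integral_right_succ [CompleteSpace E] {f : ℝ → E} {n : ℕ∞}
    (hf : ContDiff ℝ n f) (c : ℝ) : ContDiff ℝ (n + 1) fun s => ∫ t in c..s, f t := by
  rw [contDiff_succ_iff_deriv]
  refine ⟨fun s => (hf.continuous.integral_hasStrictDerivAt c s).hasDerivAt.differentiableAt,
    by simp, ?_⟩
  rwa [funext (hf.continuous.deriv_integral f c)]

theorem Function.Even.integral_zero_neg {f : ℝ → E} (hf : Function.Even f) (s : ℝ) :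
    ∫ t in (0 : ℝ)..-s, f t = -∫ t in (0 : ℝ)..s, f t := by
  have h := intervalIntegral.integral_comp_neg (a := 0) (b := s) f
  simp only [hf _, neg_zero] at h
  rw [h, intervalIntegral.integral_symm]

end Primitive

theorem tendsto_mul_div_sqrt_sq_add_atTop (c A : ℝ) :
    Tendsto (fun s => c * s / √(s ^ 2 + A)) atTop (𝓝 c) := by
  have h_lim : Tendsto (fun s : ℝ => c / √(1 + A / s ^ 2)) atTop (𝓝 (c / √(1 + 0))) := by
    refine tendsto_const_nhds.div ((tendsto_const_nhds.add ?_).sqrt) (by simp)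
    exact tendsto_const_nhds.div_atTop (tendsto_pow_atTop two_ne_zero)
  rw [add_zero, sqrt_one, div_one] at h_lim
  refine h_lim.congr' ?_
  filter_upwards [eventually_gt_atTop 0] with s hs
  rw [show s ^ 2 + A = s ^ 2 * (1 + A / s ^ 2) by field_simp, sqrt_mul (sq_nonneg s),
    sqrt_sq hs.le, mul_comm c, mul_div_mul_left _ _ hs.ne']

namespace CatenaryCousin

variable {a : ℝ}

noncomputable def height (a s : ℝ) : ℝ :=
  arsinh (exp (-a) * √(s ^ 2 + exp (2 * a) * sinh a ^ 2))

theorem exp_neg_sq_mul_exp_two_mul (a : ℝ) : exp (-a) ^ 2 * exp (2 * a) = 1 := by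
  rw [← exp_nat_mul, ← exp_add]
  norm_num

theorem sq_add_exp_mul_sinh_sq_pos (ha : a ≠ 0) (s : ℝ) :
    0 < s ^ 2 + exp (2 * a) * sinh a ^ 2 :=
  add_pos_of_nonneg_of_pos (sq_nonneg s)
    (mul_pos (exp_pos _) (pow_two_pos_of_ne_zero (sinh_ne_zero.2 ha)))

theorem height_neg (a s : ℝ) : height a (-s) = height a s := by
  rw [height, height, neg_sq]

theorem height_zero (ha : 0 ≤ a) : height a 0 = a := by
  rw [height, zero_pow two_ne_zero, zero_add, show exp (2 * a) = exp a ^ 2 by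
    rw [← exp_nat_mul]; norm_num, ← mul_pow, sqrt_sq (by positivity), ← mul_assoc,
    ← exp_add, neg_add_cancel, exp_zero, one_mul, arsinh_sinh]

theorem cosh_two_mul_height (a s : ℝ) :
    cosh (2 * height a s) = 2 * exp (-2 * a) * s ^ 2 + cosh (2 * a) := by
  rw [cosh_two_mul, cosh_sq', height, sinh_arsinh, mul_pow, sq_sqrt (by positivity),
    cosh_two_mul, cosh_sq', show exp (-2 * a) = exp (-a) ^ 2 by rw [← exp_nat_mul]; ring_nf]
  linear_combination 2 * sinh a ^ 2 * exp_neg_sq_mul_exp_two_mul a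

theorem cosh_height (a s : ℝ) :
    cosh (height a s) = exp (-a) * √(s ^ 2 + exp (2 * a) * cosh a ^ 2) := by
  have h_sq : 1 + exp (-a) ^ 2 * (s ^ 2 + exp (2 * a) * sinh a ^ 2)
      = exp (-a) ^ 2 * (s ^ 2 + exp (2 * a) * cosh a ^ 2) := by
    linear_combination (-1 : ℝ) * exp_neg_sq_mul_exp_two_mul a
      - exp (-a) ^ 2 * exp (2 * a) * cosh_sq_sub_sinh_sq a
  rw [height, cosh_arsinh, mul_pow, sq_sqrt (by positivity), h_sq, sqrt_mul (sq_nonneg _),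
    sqrt_sq (exp_pos _).le]

theorem hasDerivAt_height (ha : a ≠ 0) (s : ℝ) :
    HasDerivAt (height a)
      (s / (√(s ^ 2 + exp (2 * a) * sinh a ^ 2) * √(s ^ 2 + exp (2 * a) * cosh a ^ 2))) s := by
  have h_pos := sq_add_exp_mul_sinh_sq_pos ha s
  have h := ((((hasDerivAt_pow 2 s).add_const _).sqrt h_pos.ne').const_mul (exp (-a))).arsinh
  have h_cosh := cosh_height a s
  rw [height, cosh_arsinh] at h_cosh
  refine h.congr_deriv ?_
  rw [h_cosh, smul_eq_mul]
  have : 0 < √(s ^ 2 + exp (2 * a) * sinh a ^ 2) := sqrt_pos.2 h_pos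
  have : 0 < √(s ^ 2 + exp (2 * a) * cosh a ^ 2) := sqrt_pos.2 (by positivity)
  field_simp
  ring

theorem contDiff_height (ha : a ≠ 0) : ContDiff ℝ ∞ (height a) :=
  contDiff_arsinh.comp <| contDiff_const.mul <|
    ((contDiff_id.pow 2).add contDiff_const).sqrt fun s => (sq_add_exp_mul_sinh_sq_pos ha s).ne'

theorem cosh_height_mul_deriv_height (ha : a ≠ 0) (s : ℝ) :
    cosh (height a s) * deriv (height a) s
      = exp (-a) * s / √(s ^ 2 + exp (2 * a) * sinh a ^ 2) := by
  rw [(hasDerivAt_height ha s).deriv, cosh_height]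
  have : 0 < √(s ^ 2 + exp (2 * a) * cosh a ^ 2) := sqrt_pos.2 (by positivity)
  field_simp

theorem sq_add_cosh_two_mul_sq_sub_one (a t : ℝ) :
    (2 * exp (-2 * a) * t ^ 2 + cosh (2 * a)) ^ 2 - 1
      = (2 * exp (-2 * a)) ^ 2
        * ((t ^ 2 + exp (2 * a) * sinh a ^ 2) * (t ^ 2 + exp (2 * a) * cosh a ^ 2)) := by
  have h_exp : exp (-2 * a) * exp (2 * a) = 1 := by rw [← exp_add]; norm_num
  rw [cosh_two_mul]
  linear_combination (cosh a ^ 2 - sinh a ^ 2 + 1) * cosh_sq_sub_sinh_sq a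
    + (-(4 * exp (-2 * a) * t ^ 2 * (cosh a ^ 2 + sinh a ^ 2))
      - 4 * cosh a ^ 2 * sinh a ^ 2 * (exp (-2 * a) * exp (2 * a) + 1)) * h_exp

theorem height_integrand_eq (ha : a ≠ 0) (t : ℝ) :
    2 * exp (-2 * a) * t * ((2 * exp (-2 * a) * t ^ 2 + cosh (2 * a)) ^ 2 - 1) ^ (-(1 : ℝ) / 2)
      = t / (√(t ^ 2 + exp (2 * a) * sinh a ^ 2) * √(t ^ 2 + exp (2 * a) * cosh a ^ 2)) := by
  have h_A : 0 < t ^ 2 + exp (2 * a) * sinh a ^ 2 := sq_add_exp_mul_sinh_sq_pos ha t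
  have h_B : 0 < t ^ 2 + exp (2 * a) * cosh a ^ 2 := by positivity
  rw [sq_add_cosh_two_mul_sq_sub_one, neg_div, rpow_neg (by positivity), ← sqrt_eq_rpow,
    sqrt_mul (sq_nonneg _), sqrt_sq (by positivity), sqrt_mul h_A.le]
  have : 0 < √(t ^ 2 + exp (2 * a) * sinh a ^ 2) := sqrt_pos.2 h_A
  have : 0 < √(t ^ 2 + exp (2 * a) * cosh a ^ 2) := sqrt_pos.2 h_B
  field_simp

theorem add_integral_eq_height (ha : 0 < a) (s : ℝ) :
    a + ∫ t in (0 : ℝ)..s, 2 * exp (-2 * a) * t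
        * ((2 * exp (-2 * a) * t ^ 2 + cosh (2 * a)) ^ 2 - 1) ^ (-(1 : ℝ) / 2)
      = height a s := by
  have h_cont : Continuous fun t : ℝ =>
      t / (√(t ^ 2 + exp (2 * a) * sinh a ^ 2) * √(t ^ 2 + exp (2 * a) * cosh a ^ 2)) :=
    continuous_id.div (by fun_prop) fun t => by
      have := sqrt_pos.2 (sq_add_exp_mul_sinh_sq_pos ha.ne' t)
      have : 0 < √(t ^ 2 + exp (2 * a) * cosh a ^ 2) := sqrt_pos.2 (by positivity)
      positivity
  simp_rw [height_integrand_eq ha.ne']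
  rw [intervalIntegral.integral_eq_sub_of_hasDerivAt (fun t _ => hasDerivAt_height ha.ne' t)
    (h_cont.intervalIntegrable 0 s), height_zero ha.le]
  ring

noncomputable def lambdaIntegrand (a t : ℝ) : ℝ :=
  exp a * (2 * t ^ 2 + exp (2 * a) * sinh (2 * a))
    / (2 * (t ^ 2 + exp (2 * a) * cosh a ^ 2) * √(t ^ 2 + exp (2 * a) * sinh a ^ 2))

theorem even_lambdaIntegrand (a : ℝ) : Function.Even (lambdaIntegrand a) := fun t => by
  rw [lambdaIntegrand, lambdaIntegrand, neg_sq]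

theorem contDiff_lambdaIntegrand (ha : a ≠ 0) : ContDiff ℝ ∞ (lambdaIntegrand a) := by
  have h_sqrt : ContDiff ℝ ∞ fun t : ℝ => √(t ^ 2 + exp (2 * a) * sinh a ^ 2) :=
    ((contDiff_id.pow 2).add contDiff_const).sqrt fun t => (sq_add_exp_mul_sinh_sq_pos ha t).ne'
  refine (by fun_prop : ContDiff ℝ ∞ fun t : ℝ => _).div
    ((by fun_prop : ContDiff ℝ ∞ fun t : ℝ => _).mul h_sqrt) fun t => ?_
  have := sqrt_pos.2 (sq_add_exp_mul_sinh_sq_pos ha t)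
  positivity

end CatenaryCousin

open CatenaryCousin

/-- Arc-length parametrization of the embedded catenary cousins in `ℍ³`: `y₁(a,·)` is smooth
even with `cosh(2y₁(a,s)) = 2e^{−2a}s² + cosh(2a)`, `Λ₁(a,·)` is smooth odd, and the
vertical Jacobi field `v₁(a,s) = cosh(y₁)·∂_s y₁` is odd, equal to
`e^{−a} s (s² + e^{2a} sinh²a)^{−1/2}`, vanishes at `0` and tends to `e^{−a}` at infinity. -/
theorem stmt18 (a : ℝ) (ha : 0 < a)
    (y₁ Λ₁ v₁ : ℝ → ℝ)
    (hy : ∀ s, y₁ s = a + ∫ t in (0:ℝ)..s,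
      2 * Real.exp (-2*a) * t *
        ((2 * Real.exp (-2*a) * t ^ 2 + Real.cosh (2*a)) ^ 2 - 1) ^ (-(1:ℝ)/2))
    (hΛ : ∀ s, Λ₁ s = ∫ t in (0:ℝ)..s,
      Real.exp a * (2 * t ^ 2 + Real.exp (2*a) * Real.sinh (2*a))
        / (2 * (t ^ 2 + Real.exp (2*a) * Real.cosh a ^ 2)
            * Real.sqrt (t ^ 2 + Real.exp (2*a) * Real.sinh a ^ 2)))
    (hv : ∀ s, v₁ s = Real.cosh (y₁ s) * deriv y₁ s) :
    (ContDiff ℝ (⊤ : ℕ∞) y₁ ∧ (∀ s, y₁ (-s) = y₁ s) ∧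
      ∀ s, Real.cosh (2 * y₁ s) = 2 * Real.exp (-2*a) * s ^ 2 + Real.cosh (2*a)) ∧
    (ContDiff ℝ (⊤ : ℕ∞) Λ₁ ∧ ∀ s, Λ₁ (-s) = -Λ₁ s) ∧
    ((∀ s, v₁ (-s) = -v₁ s) ∧
      (∀ s, v₁ s = Real.exp (-a) * s /
        Real.sqrt (s ^ 2 + Real.exp (2*a) * Real.sinh a ^ 2)) ∧
      v₁ 0 = 0 ∧
      Filter.Tendsto v₁ Filter.atTop (nhds (Real.exp (-a)))) := by
  have hy₁ : y₁ = height a := funext fun s => (hy s).trans (add_integral_eq_height ha s)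
  have hΛ₁ : Λ₁ = fun s => ∫ t in (0 : ℝ)..s, lambdaIntegrand a t := funext hΛ
  have hv₁ (s : ℝ) : v₁ s = exp (-a) * s / √(s ^ 2 + exp (2 * a) * sinh a ^ 2) := by
    rw [hv, hy₁, cosh_height_mul_deriv_height ha.ne']
  subst hy₁ hΛ₁
  refine ⟨⟨contDiff_height ha.ne', height_neg a, cosh_two_mul_height a⟩,
    ⟨((contDiff_lambdaIntegrand ha.ne').integral_right_succ 0).of_le le_self_add,
      (even_lambdaIntegrand a).integral_zero_neg⟩,
    fun s => by rw [hv₁, hv₁, neg_sq, mul_neg, neg_div], hv₁, by rw [hv₁]; simp, ?_⟩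
  exact (tendsto_mul_div_sqrt_sq_add_atTop _ _).congr fun s => (hv₁ s).symm
end
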